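/- arXiv:1008.0124 — 9 statements merged into one kernel-verified Lean document; each statement's English description precedes it below -/
import Mathlib

section
/- Let G be a group, x, y ∈ G, and ℓ a positive integer. If prod(x,y;ℓ) = prod(y,x;ℓ), then for every positive integer q, prod(x,y;qℓ) = prod(y,x;qℓ). -/
/-- `altProd a b ℓ` is the alternating product `a * b * a * ⋯` with `ℓ` factors, starting with `a`. -/
def altProd {G : Type*} [Monoid G] : G → G → ℕ → G
  | _, _, 0 => 1
  | a, b, n + 1 => a * altProd b a n

lemma altProd_add {G : Type*} [Monoid G] (a b : G) (m n : ℕ) :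
    altProd a b (m + n) = altProd a b m *
      (if Even m then altProd a b n else altProd b a n) := by
  induction m generalizing a b with
  | zero => simp [altProd]
  | succ k ih =>
    rw [Nat.succ_add]
    simp only [altProd]
    rw [ih b a]
    rcases Nat.even_or_odd k with hk | hk
    · rw [if_pos hk, if_neg (by simp [Nat.even_add_one, hk]), mul_assoc]
    · rw [if_neg (Nat.not_even_iff_odd.mpr hk),
        if_pos (by simp [Nat.even_add_one, Nat.not_even_iff_odd.mpr hk]), mul_assoc]

theorem artin_relation_multiples {G : Type*} [Group G] (x y : G) (ℓ : ℕ) (hℓ : 0 < ℓ)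
    (h : altProd x y ℓ = altProd y x ℓ) :
    ∀ q : ℕ, 0 < q → altProd x y (q * ℓ) = altProd y x (q * ℓ) := by
  intro q hq
  induction q with
  | zero => simp [altProd]
  | succ k ih =>
    rcases Nat.eq_zero_or_pos k with rfl | hk
    · simpa using h
    · have ihk := ih hk
      rw [Nat.succ_mul, Nat.add_comm]
      rw [altProd_add, altProd_add, h]
      by_cases he : Even ℓ
      · simp [he, ihk]
      · simp [he, ihk.symm]
end

section
/- Let G be a group containing elements T₀, T₁, T₂, T₃ such that TᵢTⱼTᵢ = TⱼTᵢTⱼ whenever |i−j| = 1 and TᵢTⱼ = TⱼTᵢ whenever |i−j| ≥ 2. Set x = T₀ and y = T₁T₂T₃. Then (xy)⁵ = (yx)⁵, i.e., x and y satisfy the Artin relation of length 10. -/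
theorem chain_four_artin_ten {G : Type*} [Group G] (T₀ T₁ T₂ T₃ : G)
    (h01 : T₀ * T₁ * T₀ = T₁ * T₀ * T₁)
    (h12 : T₁ * T₂ * T₁ = T₂ * T₁ * T₂)
    (h23 : T₂ * T₃ * T₂ = T₃ * T₂ * T₃)
    (h02 : T₀ * T₂ = T₂ * T₀)
    (h03 : T₀ * T₃ = T₃ * T₀)
    (h13 : T₁ * T₃ = T₃ * T₁) :
    (T₀ * (T₁ * T₂ * T₃)) ^ 5 = ((T₁ * T₂ * T₃) * T₀) ^ 5 := by
  -- pointwise versions of the relations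
  have h01' : ∀ t : G, T₀ * (T₁ * (T₀ * t)) = T₁ * (T₀ * (T₁ * t)) := by
    intro t; simp only [← mul_assoc]; rw [h01]
  have h12' : ∀ t : G, T₁ * (T₂ * (T₁ * t)) = T₂ * (T₁ * (T₂ * t)) := by
    intro t; simp only [← mul_assoc]; rw [h12]
  have h23' : ∀ t : G, T₂ * (T₃ * (T₂ * t)) = T₃ * (T₂ * (T₃ * t)) := by
    intro t; simp only [← mul_assoc]; rw [h23]
  have h23p : T₂ * (T₃ * T₂) = T₃ * (T₂ * T₃) := by
    simp only [← mul_assoc]; rw [h23]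
  have c02 : ∀ t : G, T₂ * (T₀ * t) = T₀ * (T₂ * t) := by
    intro t; simp only [← mul_assoc]; rw [h02]
  have c03 : ∀ t : G, T₃ * (T₀ * t) = T₀ * (T₃ * t) := by
    intro t; simp only [← mul_assoc]; rw [h03]
  have c13 : ∀ t : G, T₃ * (T₁ * t) = T₁ * (T₃ * t) := by
    intro t; simp only [← mul_assoc]; rw [h13]
  set δ : G := T₀ * (T₁ * T₂ * T₃) with hδ
  have hδ' : δ = T₀ * (T₁ * (T₂ * T₃)) := by rw [hδ, mul_assoc]
  have A1 : δ * T₀ = T₁ * δ := by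
    rw [hδ']; simp only [mul_assoc]
    rw [← h03, c02 T₃, h01' (T₂ * T₃)]
  have A2 : δ * T₁ = T₂ * δ := by
    rw [hδ']; simp only [mul_assoc]
    rw [← h13, h12' T₃, c02 (T₁ * (T₂ * T₃))]
  have A3 : δ * T₂ = T₃ * δ := by
    rw [hδ']; simp only [mul_assoc]
    rw [h23p, ← c13 (T₂ * T₃), ← c03 (T₁ * (T₂ * T₃))]
  have B : δ * (δ * T₃) = T₀ * (δ * δ) := by
    rw [hδ']; simp only [mul_assoc]
    rw [c03 (T₁ * (T₂ * (T₃ * T₃))), c02 (T₃ * (T₁ * (T₂ * (T₃ * T₃)))),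
        c13 (T₂ * (T₃ * T₃)), ← h23' T₃, ← h12' (T₃ * (T₂ * T₃)),
        ← h01' (T₂ * (T₁ * (T₃ * (T₂ * T₃)))), ← c02 (T₁ * (T₃ * (T₂ * T₃))),
        ← c13 (T₂ * T₃), ← c03 (T₁ * (T₂ * T₃))]
  -- pointwise versions
  have A2' : ∀ t : G, δ * (T₁ * t) = T₂ * (δ * t) := by
    intro t; rw [← mul_assoc, A2, mul_assoc]
  have A3' : ∀ t : G, δ * (T₂ * t) = T₃ * (δ * t) := by
    intro t; rw [← mul_assoc, A3, mul_assoc]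
  have B' : ∀ t : G, δ * (δ * (T₃ * t)) = T₀ * (δ * (δ * t)) := by
    intro t
    calc δ * (δ * (T₃ * t)) = (δ * (δ * T₃)) * t := by simp only [mul_assoc]
      _ = (T₀ * (δ * δ)) * t := by rw [B]
      _ = T₀ * (δ * (δ * t)) := by simp only [mul_assoc]
  have key : δ ^ 5 * T₀ = T₀ * δ ^ 5 := by
    have e1 : δ ^ 5 * T₀ = δ * (δ * (δ * (δ * (δ * T₀)))) := by
      simp [pow_succ, mul_assoc]
    have e2 : δ ^ 5 = δ * (δ * (δ * (δ * δ))) := by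
      simp [pow_succ, mul_assoc]
    rw [e1, e2, A1, A2' δ, A3' (δ * δ), B' (δ * (δ * δ))]
  have hc : (T₁ * T₂ * T₃) * T₀ = T₀⁻¹ * δ * T₀ := by rw [hδ]; group
  rw [hc]
  have e3 : (T₀⁻¹ * δ * T₀) ^ 5 = T₀⁻¹ * δ ^ 5 * T₀ := by
    have := conj_pow (a := T₀⁻¹) (b := δ) (i := 5)
    simpa using this
  rw [e3, mul_assoc, key, inv_mul_cancel_left]
end

section
/- Let k ≥ 2 be an integer and G a group containing elements T₀, T₁, …, T_k such that TᵢTⱼTᵢ = TⱼTᵢTⱼ whenever |i−j| = 1 and TᵢTⱼ = TⱼTᵢ whenever |i−j| ≥ 2. Set x = T₀ and y = T₁T₂⋯T_k. Then prod(x,y;2k+4) = prod(y,x;2k+4), i.e., x and y satisfy the Artin relation of length 2k+4. -/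
section AltProd

variable {G : Type*}

theorem altProd_two_mul [Monoid G] (a b : G) (n : ℕ) : altProd a b (2 * n) = (a * b) ^ n := by
  induction n generalizing a b with
  | zero => simp [altProd]
  | succ n ih => rw [Nat.mul_succ, altProd, altProd, ih, pow_succ', mul_assoc]

theorem altProd_two_mul_comm_of_commute [CancelMonoid G] {a b : G} {n : ℕ}
    (h : Commute a ((a * b) ^ n)) : altProd a b (2 * n) = altProd b a (2 * n) := by
  rw [altProd_two_mul, altProd_two_mul]
  apply mul_left_cancel (a := a)
  rw [← mul_pow_mul, h.eq]

end AltProd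

/-- `T 0, …, T k` satisfy the relations of the standard generators of the braid group `B (k + 2)`. -/
structure IsBraidChain {G : Type*} [Monoid G] (T : ℕ → G) (k : ℕ) : Prop where
  braid : ∀ i, i + 1 ≤ k → T i * T (i + 1) * T i = T (i + 1) * T i * T (i + 1)
  comm : ∀ i j, i + 2 ≤ j → j ≤ k → T i * T j = T j * T i

def chainProd {G : Type*} [Monoid G] (T : ℕ → G) (m : ℕ) : G :=
  ((List.range m).map T).prod

section ChainProd

variable {G : Type*} [Monoid G]

theorem chainProd_succ (T : ℕ → G) (m : ℕ) :
    chainProd T (m + 1) = chainProd T m * T m := by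
  simp [chainProd, List.range_succ]

theorem chainProd_succ' (T : ℕ → G) (m : ℕ) :
    chainProd T (m + 1) = T 0 * ((List.range m).map fun i => T (i + 1)).prod := by
  simp [chainProd, List.range_succ_eq_map, Function.comp_def]

end ChainProd

namespace IsBraidChain

variable {G : Type*} [Monoid G] {T : ℕ → G} {k : ℕ}

theorem commute_chainProd (hT : IsBraidChain T k) {i m : ℕ} (hmi : m + 1 ≤ i) (hik : i ≤ k) :
    Commute (T i) (chainProd T m) := by
  refine Commute.list_prod_right _ _ fun _ hj => ?_
  obtain ⟨j, hj, rfl⟩ := List.mem_map.mp hj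
  exact (hT.comm j i (by grind) hik).symm

theorem chainProd_mul_eq_mul_chainProd (hT : IsBraidChain T k) {i m : ℕ} (him : i + 2 ≤ m)
    (hmk : m ≤ k + 1) : chainProd T m * T i = T (i + 1) * chainProd T m := by
  induction m, him using Nat.le_induction with
  | base =>
    have hcomm : T (i + 1) * chainProd T i = chainProd T i * T (i + 1) :=
      hT.commute_chainProd le_rfl (by omega)
    calc chainProd T (i + 2) * T i = chainProd T i * (T i * T (i + 1) * T i) := by
          simp only [chainProd_succ, mul_assoc]
      _ = T (i + 1) * chainProd T i * (T i * T (i + 1)) := by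
          rw [hT.braid i (by omega)]; simp only [← mul_assoc]; rw [← hcomm]
      _ = T (i + 1) * chainProd T (i + 2) := by simp only [chainProd_succ, mul_assoc]
  | succ m him ih =>
    calc chainProd T (m + 1) * T i = chainProd T m * T i * T m := by
          rw [chainProd_succ, mul_assoc, ← hT.comm i m him (by omega), ← mul_assoc]
      _ = T (i + 1) * chainProd T (m + 1) := by
          rw [ih (by omega), chainProd_succ, mul_assoc]

theorem chainProd_sq_mul_eq_mul_chainProd_sq (hT : IsBraidChain T k) {m : ℕ} (hmk : m ≤ k) :
    chainProd T (m + 1) ^ 2 * T m = T 0 * chainProd T (m + 1) ^ 2 := by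
  induction m with
  | zero => simp [chainProd, sq, mul_assoc]
  | succ m ih =>
    set D := chainProd T (m + 1)
    have hshift : D * T (m + 1) * T m = T (m + 1) * (D * T (m + 1)) := by
      rw [← chainProd_succ]; exact hT.chainProd_mul_eq_mul_chainProd le_rfl (by omega)
    rw [chainProd_succ]
    calc (D * T (m + 1)) ^ 2 * T (m + 1) = D * (T (m + 1) * (D * T (m + 1))) * T (m + 1) := by
          simp only [sq, mul_assoc]
      _ = D * D * (T (m + 1) * T m * T (m + 1)) := by rw [← hshift]; simp only [mul_assoc]
      _ = D ^ 2 * T m * (T (m + 1) * T m) := by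
          rw [← hT.braid m (by omega)]; simp only [sq, mul_assoc]
      _ = T 0 * D * (D * T (m + 1) * T m) := by rw [ih (by omega)]; simp only [sq, mul_assoc]
      _ = T 0 * (D * T (m + 1)) ^ 2 := by rw [hshift]; simp only [sq, mul_assoc]

theorem chainProd_pow_mul_eq_mul_chainProd_pow (hT : IsBraidChain T k) {j : ℕ} (hjk : j ≤ k) :
    chainProd T (k + 1) ^ j * T 0 = T j * chainProd T (k + 1) ^ j := by
  induction j with
  | zero => simp
  | succ j ih =>
    rw [pow_succ', mul_assoc, ih (by omega), ← mul_assoc,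
      hT.chainProd_mul_eq_mul_chainProd (by omega) le_rfl, mul_assoc, ← pow_succ']

theorem commute_chainProd_pow (hT : IsBraidChain T k) :
    Commute (T 0) (chainProd T (k + 1) ^ (k + 2)) := by
  set δ := chainProd T (k + 1)
  calc T 0 * δ ^ (k + 2) = T 0 * δ ^ 2 * δ ^ k := by rw [mul_assoc, ← pow_add, Nat.add_comm 2 k]
    _ = δ ^ 2 * (T k * δ ^ k) := by
        rw [← hT.chainProd_sq_mul_eq_mul_chainProd_sq le_rfl, mul_assoc]
    _ = δ ^ (k + 2) * T 0 := by
        rw [← hT.chainProd_pow_mul_eq_mul_chainProd_pow le_rfl, ← mul_assoc, ← pow_add,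
          Nat.add_comm 2 k]

end IsBraidChain

theorem even_artin_relation_general {G : Type*} [Group G] (k : ℕ) (T : ℕ → G)
    (hbraid : ∀ i, i + 1 ≤ k → T i * T (i + 1) * T i = T (i + 1) * T i * T (i + 1))
    (hcomm : ∀ i j, i + 2 ≤ j → j ≤ k → T i * T j = T j * T i) :
    altProd (T 0) (((List.range k).map (fun i => T (i + 1))).prod) (2 * k + 4)
      = altProd (((List.range k).map (fun i => T (i + 1))).prod) (T 0) (2 * k + 4) := by
  have hT : IsBraidChain T k := ⟨hbraid, hcomm⟩
  have h := hT.commute_chainProd_pow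
  rw [chainProd_succ'] at h
  exact altProd_two_mul_comm_of_commute h

theorem even_artin_relation {G : Type*} [Group G] (k : ℕ) (hk : 2 ≤ k) (T : ℕ → G)
    (hbraid : ∀ i, i + 1 ≤ k → T i * T (i + 1) * T i = T (i + 1) * T i * T (i + 1))
    (hcomm : ∀ i j, i + 2 ≤ j → j ≤ k → T i * T j = T j * T i) :
    altProd (T 0) (((List.range k).map (fun i => T (i + 1))).prod) (2 * k + 4)
      = altProd (((List.range k).map (fun i => T (i + 1))).prod) (T 0) (2 * k + 4) :=
  even_artin_relation_general k T hbraid hcomm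
end

section
/- Let k ≥ 2 and let G be a group containing T₀, …, T_k with TᵢTⱼTᵢ = TⱼTᵢTⱼ for |i−j| = 1 and TᵢTⱼ = TⱼTᵢ for |i−j| ≥ 2. Set x = T₀ and y = T₁⋯T_k. Then for every integer i with 3 ≤ i ≤ k+1: prod(x,y;2i) = prod(y,x;2i) if and only if T_{k−i+2} = T₀. -/
namespace ClaimAux

lemma altProd_even {G : Type*} [Monoid G] (a b : G) : ∀ n, altProd a b (2 * n) = (a * b) ^ n
  | 0 => by simp [altProd]
  | n + 1 => by
    rw [show 2 * (n + 1) = 2 * n + 1 + 1 from by omega]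
    rw [altProd, altProd, altProd_even a b n, pow_succ', ← mul_assoc]

lemma conjPowAux {G : Type*} [Group G] (u w : G) (n : ℕ) :
    (u⁻¹ * w * u) ^ n = u⁻¹ * w ^ n * u := by
  induction n with
  | zero => simp
  | succ n ih => rw [pow_succ, pow_succ, ih]; group

variable {G : Type*} [Group G] (T : ℕ → G)

/-- product `T a * T (a+1) * ⋯ * T (a+n-1)` -/
def P (a n : ℕ) : G := ((List.range n).map (fun j => T (a + j))).prod

lemma P_zero (a : ℕ) : P T a 0 = 1 := rfl

lemma P_succ (a n : ℕ) : P T a (n + 1) = P T a n * T (a + n) := by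
  simp [P, List.range_succ]

lemma P_cons (a n : ℕ) : P T a (n + 1) = T a * P T (a + 1) n := by
  simp only [P, List.range_succ_eq_map, List.map_cons, List.map_map, List.prod_cons,
    Nat.add_zero]
  have h : List.map ((fun j => T (a + j)) ∘ Nat.succ) (List.range n)
      = List.map (fun j => T (a + 1 + j)) (List.range n) := by
    apply List.map_congr_left
    intro j _
    simp only [Function.comp_apply]
    congr 1
    omega
  rw [h]

lemma P_split (a m n : ℕ) : P T a (m + n) = P T a m * P T (a + m) n := by
  induction n with
  | zero => simp [P_zero]
  | succ n ih =>
      rw [← Nat.add_assoc, P_succ, ih, P_succ, mul_assoc, Nat.add_assoc]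

lemma commute_P {x : G} {a n : ℕ} (h : ∀ t, t < n → Commute x (T (a + t))) :
    Commute x (P T a n) := by
  apply Commute.list_prod_right
  intro y hy
  simp only [List.mem_map, List.mem_range] at hy
  obtain ⟨t, ht, rfl⟩ := hy
  exact h t ht

/-- the key shift relation `δ * T j = T (j+1) * δ`. -/
lemma deltaA (k : ℕ)
    (hb : ∀ i, i + 1 ≤ k → T i * T (i + 1) * T i = T (i + 1) * T i * T (i + 1))
    (hc : ∀ i j, i + 2 ≤ j → j ≤ k → T i * T j = T j * T i)
    (j : ℕ) (hj : j + 1 ≤ k) :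
    P T 0 (k + 1) * T j = T (j + 1) * P T 0 (k + 1) := by
  have hδ : P T 0 (k + 1) = P T 0 j * (T j * (T (j + 1) * P T (j + 2) (k - 1 - j))) := by
    have e1 := P_split T 0 j ((k - 1 - j) + 1 + 1)
    rw [Nat.zero_add, show j + ((k - 1 - j) + 1 + 1) = k + 1 from by omega] at e1
    rw [e1, P_cons T j ((k - 1 - j) + 1), P_cons T (j + 1) (k - 1 - j)]
  have c1 : Commute (T j) (P T (j + 2) (k - 1 - j)) :=
    commute_P T (fun t ht => hc j (j + 2 + t) (by omega) (by omega))
  have c2 : Commute (T (j + 1)) (P T 0 j) :=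
    commute_P T (fun t ht => by
      rw [Nat.zero_add]
      exact (hc t (j + 1) (by omega) (by omega)).symm)
  set A := P T 0 j with hA
  set B := P T (j + 2) (k - 1 - j) with hB
  have hbr : T j * (T (j + 1) * (T j * B)) = T (j + 1) * (T j * (T (j + 1) * B)) := by
    rw [← mul_assoc, ← mul_assoc, hb j hj]
    simp only [mul_assoc]
  calc P T 0 (k + 1) * T j
      = A * (T j * (T (j + 1) * (B * T j))) := by
        rw [hδ]; simp only [mul_assoc]
    _ = A * (T j * (T (j + 1) * (T j * B))) := by rw [← c1.eq]
    _ = A * (T (j + 1) * (T j * (T (j + 1) * B))) := by rw [hbr]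
    _ = (T (j + 1) * A) * (T j * (T (j + 1) * B)) := by
        rw [← mul_assoc, ← c2.eq]
    _ = T (j + 1) * P T 0 (k + 1) := by rw [hδ, mul_assoc]

/-- push: `δ * (T 0 ⋯ T (m-1)) = (T 1 ⋯ T m) * δ` for `m ≤ k`. -/
lemma deltaPush (k : ℕ)
    (hb : ∀ i, i + 1 ≤ k → T i * T (i + 1) * T i = T (i + 1) * T i * T (i + 1))
    (hc : ∀ i j, i + 2 ≤ j → j ≤ k → T i * T j = T j * T i) :
    ∀ m, m ≤ k → P T 0 (k + 1) * P T 0 m = P T 1 m * P T 0 (k + 1) := by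
  intro m
  induction m with
  | zero => intro _; simp [P_zero]
  | succ m ih =>
      intro hm
      rw [P_succ T 0 m, Nat.zero_add, ← mul_assoc, ih (by omega), mul_assoc,
        deltaA T k hb hc m hm, ← mul_assoc, P_succ T 1 m, Nat.add_comm 1 m]

/-- `T 0 * δ² = δ² * T k`. -/
lemma deltaCentralStep (k : ℕ)
    (hb : ∀ i, i + 1 ≤ k → T i * T (i + 1) * T i = T (i + 1) * T i * T (i + 1))
    (hc : ∀ i j, i + 2 ≤ j → j ≤ k → T i * T j = T j * T i) :
    T 0 * (P T 0 (k + 1)) ^ 2 = (P T 0 (k + 1)) ^ 2 * T k := by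
  have h1 : P T 0 (k + 1) = P T 0 k * T k := by
    rw [P_succ, Nat.zero_add]
  have h2 : P T 0 (k + 1) = T 0 * P T 1 k := by
    rw [P_cons, Nat.zero_add]
  have key : P T 0 (k + 1) * P T 0 (k + 1) = P T 1 k * P T 0 (k + 1) * T k := by
    have e := congrArg (fun z => P T 0 (k + 1) * z) h1
    rw [e, ← mul_assoc, deltaPush T k hb hc k le_rfl]
  calc T 0 * P T 0 (k + 1) ^ 2
      = T 0 * (P T 0 (k + 1) * P T 0 (k + 1)) := by rw [pow_two]
    _ = T 0 * (P T 1 k * P T 0 (k + 1) * T k) := by rw [key]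
    _ = T 0 * P T 1 k * P T 0 (k + 1) * T k := by simp only [mul_assoc]
    _ = P T 0 (k + 1) * P T 0 (k + 1) * T k := by rw [← h2]
    _ = P T 0 (k + 1) ^ 2 * T k := by rw [pow_two]

/-- `δ^m * T 0 = T m * δ^m` for `m ≤ k`. -/
lemma deltaConj (k : ℕ)
    (hb : ∀ i, i + 1 ≤ k → T i * T (i + 1) * T i = T (i + 1) * T i * T (i + 1))
    (hc : ∀ i j, i + 2 ≤ j → j ≤ k → T i * T j = T j * T i) :
    ∀ m, m ≤ k → (P T 0 (k + 1)) ^ m * T 0 = T m * (P T 0 (k + 1)) ^ m := by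
  intro m
  induction m with
  | zero => intro _; simp
  | succ m ih =>
      intro hm
      rw [pow_succ', mul_assoc, ih (by omega), ← mul_assoc,
        deltaA T k hb hc m hm, mul_assoc, ← pow_succ']

/-- `T 0` commutes with `δ^(k+2)`. -/
lemma deltaCentral (k : ℕ)
    (hb : ∀ i, i + 1 ≤ k → T i * T (i + 1) * T i = T (i + 1) * T i * T (i + 1))
    (hc : ∀ i j, i + 2 ≤ j → j ≤ k → T i * T j = T j * T i) :
    T 0 * (P T 0 (k + 1)) ^ (k + 2) = (P T 0 (k + 1)) ^ (k + 2) * T 0 := by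
  have h : (P T 0 (k + 1)) ^ (k + 2) = (P T 0 (k + 1)) ^ 2 * (P T 0 (k + 1)) ^ k := by
    rw [← pow_add, Nat.add_comm 2 k]
  rw [h, ← mul_assoc, deltaCentralStep T k hb hc, mul_assoc,
    ← (deltaConj T k hb hc k le_rfl), ← mul_assoc]

end ClaimAux

open ClaimAux in
theorem claim_even_lengths {G : Type*} [Group G] (k : ℕ) (hk : 2 ≤ k) (T : ℕ → G)
    (hbraid : ∀ i, i + 1 ≤ k → T i * T (i + 1) * T i = T (i + 1) * T i * T (i + 1))
    (hcomm : ∀ i j, i + 2 ≤ j → j ≤ k → T i * T j = T j * T i) :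
    ∀ i : ℕ, 3 ≤ i → i ≤ k + 1 →
      (altProd (T 0) (((List.range k).map (fun j => T (j + 1))).prod) (2 * i)
          = altProd (((List.range k).map (fun j => T (j + 1))).prod) (T 0) (2 * i)
        ↔ T (k + 2 - i) = T 0) := by
  intro i hi3 hik
  set y : G := ((List.range k).map (fun j => T (j + 1))).prod with hy
  have hyP : y = P T 1 k := by
    rw [hy, P]
    congr 1
    apply List.map_congr_left
    intro j _
    congr 1
    omega
  set δ : G := P T 0 (k + 1) with hδ
  have hxy : T 0 * y = δ := by rw [hyP, hδ, P_cons, Nat.zero_add]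
  set m : ℕ := k + 2 - i with hm
  have hmk : m ≤ k := by omega
  have hcent := deltaCentral T k hbraid hcomm
  have hconj := deltaConj T k hbraid hcomm m hmk
  have hsplit : (δ : G) ^ (k + 2) = δ ^ i * δ ^ m := by
    rw [← pow_add, show i + m = k + 2 from by omega]
  rw [altProd_even, altProd_even]
  have hyx : y * T 0 = (T 0)⁻¹ * (T 0 * y) * T 0 := by group
  rw [hyx, conjPowAux, hxy]
  constructor
  · intro h
    have hcomm_i : T 0 * δ ^ i = δ ^ i * T 0 := by
      conv_lhs => rw [h]
      group
    have h3 : δ ^ i * (T 0 * δ ^ m) = δ ^ i * (δ ^ m * T 0) := by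
      rw [← mul_assoc, ← hcomm_i, mul_assoc, ← hsplit, hcent, hsplit, mul_assoc]
    have h2 : T 0 * δ ^ m = δ ^ m * T 0 := mul_left_cancel h3
    have h4 : T 0 * δ ^ m = T m * δ ^ m := by rw [h2]; exact hconj
    exact (mul_right_cancel h4).symm
  · intro h
    have h2 : T 0 * δ ^ m = δ ^ m * T 0 := by
      conv_rhs => rw [hconj]
      rw [h]
    have h3 : (T 0 * δ ^ i) * δ ^ m = (δ ^ i * T 0) * δ ^ m := by
      rw [mul_assoc, ← hsplit, hcent, hsplit, mul_assoc, ← h2, ← mul_assoc]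
    have hcomm_i : T 0 * δ ^ i = δ ^ i * T 0 := mul_right_cancel h3
    rw [mul_assoc, ← hcomm_i, ← mul_assoc]
    group
end

section
/- Let G be a group containing σ₁, σ₂, σ₃, σ₄ with σᵢσⱼσᵢ = σⱼσᵢσⱼ for |i−j| = 1 and σᵢσⱼ = σⱼσᵢ for |i−j| ≥ 2. Set x = σ₁σ₂ and y = σ₃σ₄. Then xyxyx = yxyxy, i.e., x and y satisfy the Artin relation of length 5. -/
theorem chain_four_artin_five {G : Type*} [Group G] (σ₁ σ₂ σ₃ σ₄ : G)
    (h12 : σ₁ * σ₂ * σ₁ = σ₂ * σ₁ * σ₂)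
    (h23 : σ₂ * σ₃ * σ₂ = σ₃ * σ₂ * σ₃)
    (h34 : σ₃ * σ₄ * σ₃ = σ₄ * σ₃ * σ₄)
    (h13 : σ₁ * σ₃ = σ₃ * σ₁)
    (h14 : σ₁ * σ₄ = σ₄ * σ₁)
    (h24 : σ₂ * σ₄ = σ₄ * σ₂) :
    (σ₁ * σ₂) * (σ₃ * σ₄) * (σ₁ * σ₂) * (σ₃ * σ₄) * (σ₁ * σ₂)
      = (σ₃ * σ₄) * (σ₁ * σ₂) * (σ₃ * σ₄) * (σ₁ * σ₂) * (σ₃ * σ₄) := by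
  have c31 : ∀ c : G, σ₃ * (σ₁ * c) = σ₁ * (σ₃ * c) := fun c => by
    rw [← mul_assoc, ← h13, mul_assoc]
  have c41 : ∀ c : G, σ₄ * (σ₁ * c) = σ₁ * (σ₄ * c) := fun c => by
    rw [← mul_assoc, ← h14, mul_assoc]
  have c42 : ∀ c : G, σ₄ * (σ₂ * c) = σ₂ * (σ₄ * c) := fun c => by
    rw [← mul_assoc, ← h24, mul_assoc]
  have b12 : ∀ c : G, σ₁ * (σ₂ * (σ₁ * c)) = σ₂ * (σ₁ * (σ₂ * c)) := fun c => by
    rw [← mul_assoc, ← mul_assoc, h12, mul_assoc, mul_assoc]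
  have b23 : ∀ c : G, σ₂ * (σ₃ * (σ₂ * c)) = σ₃ * (σ₂ * (σ₃ * c)) := fun c => by
    rw [← mul_assoc, ← mul_assoc, h23, mul_assoc, mul_assoc]
  have b34 : ∀ c : G, σ₃ * (σ₄ * (σ₃ * c)) = σ₄ * (σ₃ * (σ₄ * c)) := fun c => by
    rw [← mul_assoc, ← mul_assoc, h34, mul_assoc, mul_assoc]
  simp only [mul_assoc]
  conv_lhs => rw [c41, c41, ← c41, c31, ← h24, b12, c42, b23, ← c31, b23, ← c31,
    b34, ← c42, ← c41]
end

section
/- Let k ≥ 2 and let G be a group containing σ₁, …, σ_{2k} with σᵢσⱼσᵢ = σⱼσᵢσⱼ for |i−j| = 1 and σᵢσⱼ = σⱼσᵢ for |i−j| ≥ 2. Set x = σ₁⋯σ_k and y = σ_{k+1}⋯σ_{2k} (writing Aᵢ = σᵢ and Bᵢ = σ_{k+i}). Then for every positive integer m ≤ k: (xy)^m x = (yx)^m y if and only if A₁A₂⋯A_k = A_{k−m+1}A_{k−m+2}⋯A_k B₁B₂⋯B_{k−m}. -/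
namespace OddArtinAux

variable {G : Type*} [Monoid G]

/-- `blk σ a n = σ a * σ (a+1) * ⋯ * σ (a+n-1)`. -/
def blk (σ : ℕ → G) (a n : ℕ) : G := ((List.range n).map (fun i => σ (a + i))).prod

lemma blk_zero (σ : ℕ → G) (a : ℕ) : blk σ a 0 = 1 := rfl

lemma blk_succ (σ : ℕ → G) (a n : ℕ) :
    blk σ a (n + 1) = blk σ a n * σ (a + n) := by
  simp [blk, List.range_succ]

lemma blk_one (σ : ℕ → G) (a : ℕ) : blk σ a 1 = σ a := by
  simp [blk, List.range_succ]

lemma blk_succ' (σ : ℕ → G) (a n : ℕ) :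
    blk σ a (n + 1) = σ a * blk σ (a + 1) n := by
  induction n with
  | zero => simp [blk_one, blk_zero]
  | succ n ih =>
      rw [blk_succ σ a (n + 1), ih, blk_succ σ (a + 1) n, mul_assoc,
        show a + (n + 1) = a + 1 + n by omega]

lemma blk_add (σ : ℕ → G) (a n p : ℕ) :
    blk σ a (n + p) = blk σ a n * blk σ (a + n) p := by
  induction p with
  | zero => simp [blk_zero]
  | succ p ih =>
      rw [show n + (p + 1) = (n + p) + 1 by omega, blk_succ, ih, blk_succ, mul_assoc,
        show a + n + p = a + (n + p) by omega]

lemma commute_blk (σ : ℕ → G) (g : G) (a n : ℕ)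
    (h : ∀ j, a ≤ j → j < a + n → Commute g (σ j)) : Commute g (blk σ a n) := by
  induction n with
  | zero => rw [blk_zero]; exact Commute.one_right g
  | succ n ih =>
      rw [blk_succ]
      exact (ih (fun j h1 h2 => h j h1 (by omega))).mul_right (h (a + n) (by omega) (by omega))

section GroupPart

variable {H : Type*} [Group H] (k : ℕ) (σ : ℕ → H)
  (hbraid : ∀ i, 1 ≤ i → i + 1 ≤ 2 * k → σ i * σ (i + 1) * σ i = σ (i + 1) * σ i * σ (i + 1))
  (hcomm : ∀ i j, 1 ≤ i → i + 2 ≤ j → j ≤ 2 * k → σ i * σ j = σ j * σ i)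

include hbraid hcomm

/-- The fundamental shift: `δ σ_i = σ_{i+1} δ` for `δ = σ₁⋯σ_{2k}`. -/
lemma key (i : ℕ) (h1 : 1 ≤ i) (h2 : i + 1 ≤ 2 * k) :
    blk σ 1 (2 * k) * σ i = σ (i + 1) * blk σ 1 (2 * k) := by
  obtain ⟨j, rfl⟩ : ∃ j, i = j + 1 := ⟨i - 1, by omega⟩
  set r := 2 * k - (j + 2) with hr
  have hsplit : blk σ 1 (2 * k) = blk σ 1 (j + 2) * blk σ (j + 3) r := by
    have h := blk_add σ 1 (j + 2) r
    rw [show (j + 2) + r = 2 * k by omega] at h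
    rw [h, show 1 + (j + 2) = j + 3 by omega]
  have hc1 : Commute (σ (j + 1)) (blk σ (j + 3) r) := by
    apply commute_blk
    intro l hl1 hl2
    exact hcomm (j + 1) l (by omega) (by omega) (by omega)
  have hc2 : Commute (σ (j + 2)) (blk σ 1 j) := by
    apply commute_blk
    intro l hl1 hl2
    exact Eq.symm (hcomm l (j + 2) (by omega) (by omega) (by omega))
  have hb : σ (j + 1) * σ (j + 2) * σ (j + 1) = σ (j + 2) * σ (j + 1) * σ (j + 2) :=
    hbraid (j + 1) (by omega) (by omega)
  have hfront : blk σ 1 (j + 2) = blk σ 1 j * (σ (j + 1) * σ (j + 2)) := by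
    rw [blk_succ, blk_succ, show (1 : ℕ) + j = j + 1 by omega,
      show (1 : ℕ) + (j + 1) = j + 2 by omega, mul_assoc]
  calc blk σ 1 (2 * k) * σ (j + 1)
      = blk σ 1 j * (σ (j + 1) * σ (j + 2)) * (blk σ (j + 3) r * σ (j + 1)) := by
        rw [hsplit, hfront]; group
    _ = blk σ 1 j * (σ (j + 1) * σ (j + 2) * σ (j + 1)) * blk σ (j + 3) r := by
        rw [← hc1.eq]; group
    _ = blk σ 1 j * (σ (j + 2) * σ (j + 1) * σ (j + 2)) * blk σ (j + 3) r := by rw [hb]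
    _ = σ (j + 2) * (blk σ 1 j * (σ (j + 1) * σ (j + 2)) * blk σ (j + 3) r) := by
        rw [show blk σ 1 j * (σ (j + 2) * σ (j + 1) * σ (j + 2)) * blk σ (j + 3) r
            = (blk σ 1 j * σ (j + 2)) * (σ (j + 1) * σ (j + 2) * blk σ (j + 3) r) by group,
          ← hc2.eq]
        group
    _ = σ (j + 1 + 1) * blk σ 1 (2 * k) := by rw [hsplit, hfront]

lemma shift (a n : ℕ) (ha : 1 ≤ a) (h : a + n ≤ 2 * k) :
    blk σ 1 (2 * k) * blk σ a n = blk σ (a + 1) n * blk σ 1 (2 * k) := by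
  induction n generalizing a with
  | zero => simp [blk_zero]
  | succ n ih =>
      rw [blk_succ' σ a n, blk_succ' σ (a + 1) n, ← mul_assoc,
        key k σ hbraid hcomm a ha (by omega), mul_assoc, ih (a + 1) (by omega) (by omega),
        show a + 1 + 1 = a + 2 by omega]
      group

lemma pow_shift (m a n : ℕ) (ha : 1 ≤ a) (h : a + n + m ≤ 2 * k + 1) :
    (blk σ 1 (2 * k)) ^ m * blk σ a n = blk σ (a + m) n * (blk σ 1 (2 * k)) ^ m := by
  induction m generalizing a with
  | zero => simp
  | succ m ih =>
      rw [pow_succ', mul_assoc, ih a ha (by omega), ← mul_assoc,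
        shift k σ hbraid hcomm (a + m) n (by omega) (by omega),
        show a + m + 1 = a + (m + 1) by omega, mul_assoc, ← pow_succ']

end GroupPart

end OddArtinAux

theorem odd_artin_claim2 {G : Type*} [Group G] (k : ℕ) (hk : 2 ≤ k) (σ : ℕ → G)
    (hbraid : ∀ i, 1 ≤ i → i + 1 ≤ 2 * k → σ i * σ (i + 1) * σ i = σ (i + 1) * σ i * σ (i + 1))
    (hcomm : ∀ i j, 1 ≤ i → i + 2 ≤ j → j ≤ 2 * k → σ i * σ j = σ j * σ i) :
    ∀ m : ℕ, 1 ≤ m → m ≤ k →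
      ((((List.range k).map (fun i => σ (i + 1))).prod
            * ((List.range k).map (fun i => σ (k + 1 + i))).prod) ^ m
          * ((List.range k).map (fun i => σ (i + 1))).prod
        = (((List.range k).map (fun i => σ (k + 1 + i))).prod
            * ((List.range k).map (fun i => σ (i + 1))).prod) ^ m
          * ((List.range k).map (fun i => σ (k + 1 + i))).prod
      ↔ ((List.range k).map (fun i => σ (i + 1))).prod
          = ((List.range m).map (fun i => σ (k - m + 1 + i))).prod
            * ((List.range (k - m)).map (fun i => σ (k + 1 + i))).prod) := by
  intro m hm1 hm2
  have hx : ((List.range k).map (fun i => σ (i + 1))).prod = OddArtinAux.blk σ 1 k := by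
    have hf : (fun i => σ (i + 1)) = (fun i : ℕ => σ (1 + i)) := by
      funext i
      rw [Nat.add_comm]
    unfold OddArtinAux.blk
    rw [hf]
  have hy : ((List.range k).map (fun i => σ (k + 1 + i))).prod = OddArtinAux.blk σ (k + 1) k := rfl
  have hP : ((List.range m).map (fun i => σ (k - m + 1 + i))).prod
      = OddArtinAux.blk σ (k - m + 1) m := rfl
  have hQ : ((List.range (k - m)).map (fun i => σ (k + 1 + i))).prod
      = OddArtinAux.blk σ (k + 1) (k - m) := rfl
  rw [hx, hy, hP, hQ]
  set X := OddArtinAux.blk σ 1 k with hX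
  set Y := OddArtinAux.blk σ (k + 1) k with hY
  have hδ : OddArtinAux.blk σ 1 (2 * k) = X * Y := by
    rw [hX, hY, show 2 * k = k + k by omega, OddArtinAux.blk_add,
      show 1 + k = k + 1 by omega]
  have hsc : Y * (X * Y) ^ m = (Y * X) ^ m * Y := by
    have h0 : SemiconjBy Y (X * Y) (Y * X) := by
      unfold SemiconjBy
      group
    exact (h0.pow_right m).eq
  have s1 : (X * Y) ^ m * X = OddArtinAux.blk σ (1 + m) k * (X * Y) ^ m := by
    rw [← hδ, hX]
    exact OddArtinAux.pow_shift k σ hbraid hcomm m 1 k (le_refl 1) (by omega)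
  have s2 : (X * Y) ^ m * OddArtinAux.blk σ (k - m + 1) k
      = Y * (X * Y) ^ m := by
    rw [← hδ, hY]
    have h := OddArtinAux.pow_shift k σ hbraid hcomm m (k - m + 1) k (by omega) (by omega)
    rw [show k - m + 1 + m = k + 1 by omega] at h
    exact h
  have hsplit2 : OddArtinAux.blk σ (k - m + 1) m * OddArtinAux.blk σ (k + 1) (k - m)
      = OddArtinAux.blk σ (k - m + 1) k := by
    have h := OddArtinAux.blk_add σ (k - m + 1) m (k - m)
    rw [show m + (k - m) = k by omega, show k - m + 1 + m = k + 1 by omega] at h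
    exact h.symm
  rw [hsplit2, ← hsc, s1]
  constructor
  · intro h
    have h2 : (X * Y) ^ m * X = (X * Y) ^ m * OddArtinAux.blk σ (k - m + 1) k := by
      rw [s1, s2, h]
    exact mul_left_cancel h2
  · intro h
    rw [← s1, ← s2]
    exact congrArg (fun z => (X * Y) ^ m * z) h
end

section
/- Let k ≥ 3 be an integer and let G be a group containing T₁, …, T_{k−1} with TᵢTⱼTᵢ = TⱼTᵢTⱼ for |i−j| = 1 and TᵢTⱼ = TⱼTᵢ for |i−j| ≥ 2. Let x be the product of all Tᵢ with i odd (in increasing order of i) and y the product of all Tᵢ with i even (in increasing order of i), for 1 ≤ i ≤ k−1. Then prod(x,y;k) = prod(y,x;k), i.e., x and y satisfy the Artin relation of length k. -/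
namespace FoldA
variable {G : Type*} [Monoid G]

def blk (T : ℕ → G) : ℕ → G
  | 0 => 1
  | 1 => T 1
  | (j+2) => blk T j * T (j+2)

def tau (T : ℕ → G) (a : ℕ) : ℕ → G
  | 0 => 1
  | (r+1) => tau T a r * T (a - r)

def Ch (T : ℕ → G) : ℕ → G
  | 0 => 1
  | (s+1) => blk T (s+1) * Ch T s

def DD (T : ℕ → G) : ℕ → G
  | 0 => 1
  | (m+1) => DD T m * tau T (m+1) (m+1)

def CJ (T : ℕ → G) (a : ℕ) : ℕ → G
  | 0 => 1
  | (j+1) => CJ T a j * (blk T (a - 2*(j+1)) * blk T (a - 2*(j+1) - 1))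

def RS (T : ℕ → G) (a : ℕ) : ℕ → ℕ → G
  | 0, _ => 1
  | (d+1), t => RS T a d (t+1) * tau T a (2*t)

def OS (T : ℕ → G) (a : ℕ) : ℕ → ℕ → G
  | 0, _ => 1
  | (d+1), t => OS T a d (t+1) * tau T a (2*t+1)

lemma blk_eq (T : ℕ → G) (j : ℕ) (h : 1 ≤ j) : blk T j = blk T (j-2) * T j := by
  match j, h with
  | 1, _ => simp [blk]
  | (j+2), _ => rfl

lemma tau_one (T : ℕ → G) (a : ℕ) : tau T a 1 = T a := by simp [tau]

lemma bCh (T : ℕ → G) : ∀ u, blk T u * Ch T (u-1) = Ch T u := by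
  intro u
  match u with
  | 0 => simp [blk]
  | (v+1) => rfl

lemma RS_top (T : ℕ → G) (a : ℕ) : ∀ d t, RS T a (d+1) t = tau T a (2*(t+d)) * RS T a d t := by
  intro d
  induction d with
  | zero => intro t; simp [RS]
  | succ d ih =>
    intro t
    show RS T a (d+1) (t+1) * tau T a (2*t) = _
    rw [ih (t+1)]
    show tau T a (2*(t+1+d)) * RS T a d (t+1) * tau T a (2*t) = _
    rw [mul_assoc]
    congr 2
    omega

lemma OS_top (T : ℕ → G) (a : ℕ) : ∀ d t, OS T a (d+1) t = tau T a (2*(t+d)+1) * OS T a d t := by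
  intro d
  induction d with
  | zero => intro t; simp [OS]
  | succ d ih =>
    intro t
    show OS T a (d+1) (t+1) * tau T a (2*t+1) = _
    rw [ih (t+1)]
    show tau T a (2*(t+1+d)+1) * OS T a d (t+1) * tau T a (2*t+1) = _
    rw [mul_assoc]
    congr 3
    omega

lemma tau_top (T : ℕ → G) : ∀ r a, r ≤ a → tau T (a+1) (r+1) = T (a+1) * tau T a r := by
  intro r
  induction r with
  | zero => intro a _; simp [tau]
  | succ r ih =>
    intro a h
    show tau T (a+1) (r+1) * T (a+1 - (r+1)) = _
    rw [ih a (by omega)]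
    show T (a+1) * tau T a r * T (a+1 - (r+1)) = T (a+1) * (tau T a r * T (a - r))
    rw [mul_assoc]
    have : a + 1 - (r+1) = a - r := by omega
    rw [this]

lemma altProd_succ_right (a b : G) : ∀ ℓ, altProd a b (ℓ+1) =
    altProd a b ℓ * (if ℓ % 2 = 0 then a else b) := by
  intro ℓ
  induction ℓ generalizing a b with
  | zero => simp [altProd]
  | succ ℓ ih =>
    show a * altProd b a (ℓ+1) = a * altProd b a ℓ * _
    rw [ih b a, ← mul_assoc]
    rcases Nat.even_or_odd ℓ with h | h
    · have h1 : ℓ % 2 = 0 := Nat.even_iff.mp h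
      have h2 : (ℓ+1) % 2 = 1 := by omega
      simp [h1, h2]
    · have h1 : ℓ % 2 = 1 := Nat.odd_iff.mp h
      have h2 : (ℓ+1) % 2 = 0 := by omega
      simp [h1, h2]

section WithRel
variable (T : ℕ → G) (n : ℕ)
variable (hb : ∀ i, 1 ≤ i → i + 1 ≤ n → T i * T (i+1) * T i = T (i+1) * T i * T (i+1))
variable (hc : ∀ i j, 1 ≤ i → i + 2 ≤ j → j ≤ n → T i * T j = T j * T i)

include hc in
lemma comm_hi_blk : ∀ s i, s + 2 ≤ i → i ≤ n → T i * blk T s = blk T s * T i := by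
  intro s
  induction s using Nat.strong_induction_on with
  | _ s ih =>
    match s with
    | 0 => intro i _ _; simp [blk]
    | 1 => intro i h1 h2; simpa [blk] using (hc 1 i (by omega) (by omega) h2).symm
    | (j+2) =>
      intro i h1 h2
      show T i * (blk T j * T (j+2)) = (blk T j * T (j+2)) * T i
      rw [← mul_assoc, ih j (by omega) i (by omega) h2, mul_assoc,
        ← hc (j+2) i (by omega) (by omega) h2, mul_assoc]

include hc in
lemma comm_lo_tau : ∀ r a i, r ≤ a → 1 ≤ i → i + 2 ≤ a - r + 1 → a ≤ n →
    tau T a r * T i = T i * tau T a r := by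
  intro r
  induction r with
  | zero => intro a i _ _ _ _; simp [tau]
  | succ r ih =>
    intro a i hra hi1 hi han
    show tau T a r * T (a - r) * T i = T i * (tau T a r * T (a - r))
    rw [mul_assoc, ← hc i (a - r) (by omega) (by omega) (by omega),
      ← mul_assoc, ih a i (by omega) hi1 (by omega) han, mul_assoc]

include hc in
lemma comm_tau_hi : ∀ r a i, r ≤ a → a + 2 ≤ i → i ≤ n →
    tau T a r * T i = T i * tau T a r := by
  intro r
  induction r with
  | zero => intro a i _ _ _; simp [tau]
  | succ r ih =>
    intro a i hra hi han
    show tau T a r * T (a - r) * T i = T i * (tau T a r * T (a - r))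
    rw [mul_assoc, hc (a - r) i (by omega) (by omega) han,
      ← mul_assoc, ih a i (by omega) hi han, mul_assoc]

include hc in
lemma comm_tau_blk : ∀ r a s, s + r + 1 ≤ a → a ≤ n →
    tau T a r * blk T s = blk T s * tau T a r := by
  intro r a s
  induction s using Nat.strong_induction_on with
  | _ s ih =>
    match s with
    | 0 => intro _ _; simp [blk]
    | 1 =>
      intro h1 h2
      simpa [blk] using (comm_lo_tau T n hc r a 1 (by omega) (by omega) (by omega) h2)
    | (j+2) =>
      intro h1 h2
      show tau T a r * (blk T j * T (j+2)) = (blk T j * T (j+2)) * tau T a r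
      rw [← mul_assoc, ih j (by omega) (by omega) h2, mul_assoc,
        comm_lo_tau T n hc r a (j+2) (by omega) (by omega) (by omega) h2, ← mul_assoc]

include hb hc in
lemma deltaT : ∀ a j, 2 ≤ j → j ≤ a → a ≤ n → tau T a a * T j = T (j-1) * tau T a a := by
  intro a
  induction a with
  | zero => intro j h1 h2 _; omega
  | succ a ih =>
    intro j h1 h2 han
    rcases Nat.lt_or_ge j (a+1) with hj | hj
    · rw [tau_top T a a (le_refl a), mul_assoc, ih j h1 (by omega) (by omega),
        ← mul_assoc, ← hc (j-1) (a+1) (by omega) (by omega) han, mul_assoc]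
    · have hj' : j = a + 1 := by omega
      subst hj'
      have e1 : tau T (a+1) (a+1) = T (a+1) * tau T a a := tau_top T a a (le_refl a)
      match a, h1, han, ih, e1 with
      | (b+1), _, han, ih, e1 =>
        have e2 : tau T (b+1) (b+1) = T (b+1) * tau T b b := tau_top T b b (le_refl b)
        rw [e1, e2]
        have hcomm2 : tau T b b * T (b+2) = T (b+2) * tau T b b :=
          comm_tau_hi T n hc b b (b+2) (le_refl b) (by omega) han
        have hbr : T (b+1) * T (b+2) * T (b+1) = T (b+2) * T (b+1) * T (b+2) :=
          hb (b+1) (by omega) (by omega)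
        calc T (b+2) * (T (b+1) * tau T b b) * T (b+2)
            = T (b+2) * T (b+1) * (tau T b b * T (b+2)) := by simp [mul_assoc]
          _ = T (b+2) * T (b+1) * (T (b+2) * tau T b b) := by rw [hcomm2]
          _ = (T (b+2) * T (b+1) * T (b+2)) * tau T b b := by simp [mul_assoc]
          _ = (T (b+1) * T (b+2) * T (b+1)) * tau T b b := by rw [← hbr]
          _ = T (b+1) * (T (b+2) * (T (b+1) * tau T b b)) := by simp [mul_assoc]

include hb hc in
lemma shift_tau : ∀ r a, r ≤ a → a + 1 ≤ n →
    tau T (a+1) (a+1) * tau T (a+1) r = tau T a r * tau T (a+1) (a+1) := by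
  intro r
  induction r with
  | zero => intro a _ _; simp [tau]
  | succ r ih =>
    intro a hra han
    show tau T (a+1) (a+1) * (tau T (a+1) r * T (a+1 - r)) = _
    rw [← mul_assoc, ih a (by omega) han, mul_assoc,
      deltaT T n hb hc (a+1) (a+1-r) (by omega) (by omega) han, ← mul_assoc]
    show tau T a r * T (a+1-r-1) * tau T (a+1) (a+1) = tau T a r * T (a - r) * tau T (a+1) (a+1)
    have : a + 1 - r - 1 = a - r := by omega
    rw [this]

include hb hc in
lemma shift_RS : ∀ d t a, 2*(t+d) ≤ a + 2 → a + 1 ≤ n →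
    tau T (a+1) (a+1) * RS T (a+1) d t = RS T a d t * tau T (a+1) (a+1) := by
  intro d
  induction d with
  | zero => intro t a _ _; simp [RS]
  | succ d ih =>
    intro t a hd han
    show tau T (a+1) (a+1) * (RS T (a+1) d (t+1) * tau T (a+1) (2*t)) = _
    rw [← mul_assoc, ih (t+1) a (by omega) han, mul_assoc,
      shift_tau T n hb hc (2*t) a (by omega) han, ← mul_assoc]
    rfl

include hb hc in
lemma shift_OS : ∀ d t a, 2*(t+d) ≤ a + 1 → a + 1 ≤ n →
    tau T (a+1) (a+1) * OS T (a+1) d t = OS T a d t * tau T (a+1) (a+1) := by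
  intro d
  induction d with
  | zero => intro t a _ _; simp [OS]
  | succ d ih =>
    intro t a hd han
    show tau T (a+1) (a+1) * (OS T (a+1) d (t+1) * tau T (a+1) (2*t+1)) = _
    rw [← mul_assoc, ih (t+1) a (by omega) han, mul_assoc,
      shift_tau T n hb hc (2*t+1) a (by omega) han, ← mul_assoc]
    rfl

include hc in
lemma CONVG : ∀ a r, r + 1 ≤ a → a ≤ n →
    tau T a r * blk T (a - r) = blk T (a - r - 2) * tau T a (r+1) := by
  intro a r h1 h2
  rw [blk_eq T (a-r) (by omega), ← mul_assoc,
    comm_tau_blk T n hc r a (a - r - 2) (by omega) h2, mul_assoc]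
  rfl

include hc in
lemma DESC : ∀ d t a, 1 ≤ t → 2*(t+d) ≤ a → a ≤ n →
    RS T a d t * (blk T (a - 2*t) * blk T (a - 2*t - 1)) =
      (blk T (a - 2*(t+d)) * blk T (a - 2*(t+d) - 1)) * RS T a d (t+1) := by
  intro d
  induction d with
  | zero => intro t a _ _ _; simp [RS]
  | succ d ih =>
    intro t a ht hd han
    show RS T a d (t+1) * tau T a (2*t) * (blk T (a - 2*t) * blk T (a - 2*t - 1)) = _
    have e1 : tau T a (2*t) * blk T (a - 2*t) = blk T (a - 2*t - 2) * tau T a (2*t+1) :=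
      CONVG T n hc a (2*t) (by omega) han
    have e2 : tau T a (2*t+1) * blk T (a - (2*t+1)) =
        blk T (a - (2*t+1) - 2) * tau T a (2*t+2) := CONVG T n hc a (2*t+1) (by omega) han
    have e2' : tau T a (2*t+1) * blk T (a - 2*t - 1) =
        blk T (a - 2*(t+1) - 1) * tau T a (2*(t+1)) := by
      have h3 : a - (2*t+1) = a - 2*t - 1 := by omega
      rw [h3] at e2
      have h4 : a - 2*t - 1 - 2 = a - 2*(t+1) - 1 := by omega
      have h5 : 2*t+2 = 2*(t+1) := by omega
      rw [h4, h5] at e2; exact e2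
    calc RS T a d (t+1) * tau T a (2*t) * (blk T (a - 2*t) * blk T (a - 2*t - 1))
        = RS T a d (t+1) * ((tau T a (2*t) * blk T (a - 2*t)) * blk T (a - 2*t - 1)) := by
          simp [mul_assoc]
      _ = RS T a d (t+1) * ((blk T (a - 2*t - 2) * tau T a (2*t+1)) * blk T (a - 2*t - 1)) := by
          rw [e1]
      _ = RS T a d (t+1) * (blk T (a - 2*(t+1)) *
            (tau T a (2*t+1) * blk T (a - 2*t - 1))) := by
          have h6 : a - 2*t - 2 = a - 2*(t+1) := by omega
          rw [h6, mul_assoc]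
      _ = RS T a d (t+1) * (blk T (a - 2*(t+1)) *
            (blk T (a - 2*(t+1) - 1) * tau T a (2*(t+1)))) := by rw [e2']
      _ = (RS T a d (t+1) * (blk T (a - 2*(t+1)) * blk T (a - 2*(t+1) - 1))) *
            tau T a (2*(t+1)) := by simp [mul_assoc]
      _ = ((blk T (a - 2*(t+1+d)) * blk T (a - 2*(t+1+d) - 1)) * RS T a d (t+2)) *
            tau T a (2*(t+1)) := by rw [ih (t+1) a (by omega) (by omega) han]
      _ = (blk T (a - 2*(t+(d+1))) * blk T (a - 2*(t+(d+1)) - 1)) * RS T a (d+1) (t+1) := by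
          have h7 : t+1+d = t+(d+1) := by omega
          rw [h7, mul_assoc]
          rfl

include hc in
lemma DESC1 : ∀ d t a, 1 ≤ t → 2*(t+d) ≤ a + 1 → a ≤ n →
    RS T a d t * blk T (a - 2*t) = blk T (a - 2*(t+d)) * OS T a d t := by
  intro d
  induction d with
  | zero => intro t a _ _ _; simp [RS, OS]
  | succ d ih =>
    intro t a ht hd han
    show RS T a d (t+1) * tau T a (2*t) * blk T (a - 2*t) = _
    have e1 : tau T a (2*t) * blk T (a - 2*t) = blk T (a - 2*t - 2) * tau T a (2*t+1) :=
      CONVG T n hc a (2*t) (by omega) han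
    calc RS T a d (t+1) * tau T a (2*t) * blk T (a - 2*t)
        = RS T a d (t+1) * (tau T a (2*t) * blk T (a - 2*t)) := by rw [mul_assoc]
      _ = RS T a d (t+1) * (blk T (a - 2*t - 2) * tau T a (2*t+1)) := by rw [e1]
      _ = (RS T a d (t+1) * blk T (a - 2*(t+1))) * tau T a (2*t+1) := by
          have h6 : a - 2*t - 2 = a - 2*(t+1) := by omega
          rw [h6, mul_assoc]
      _ = (blk T (a - 2*(t+1+d)) * OS T a d (t+1)) * tau T a (2*t+1) := by
          rw [ih (t+1) a (by omega) (by omega) han]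
      _ = blk T (a - 2*(t+(d+1))) * OS T a (d+1) t := by
          have h7 : t+1+d = t+(d+1) := by omega
          rw [h7, mul_assoc]
          rfl

include hc in
lemma CORE : ∀ j a, 2*j ≤ a → a ≤ n →
    altProd (blk T a) (blk T (a-1)) (2*j) = CJ T a j * RS T a j 1 := by
  intro j
  induction j with
  | zero => intro a _ _; simp [altProd, CJ, RS]
  | succ j ih =>
    intro a hj han
    have s1 : altProd (blk T a) (blk T (a-1)) (2*j+1) =
        altProd (blk T a) (blk T (a-1)) (2*j) * blk T a := by
      rw [altProd_succ_right]; simp [Nat.mul_mod_right]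
    have s2 : altProd (blk T a) (blk T (a-1)) (2*(j+1)) =
        altProd (blk T a) (blk T (a-1)) (2*j+1) * blk T (a-1) := by
      have h1 : 2*(j+1) = (2*j+1) + 1 := by omega
      rw [h1, altProd_succ_right]
      have h2 : (2*j+1) % 2 = 1 := by omega
      simp [h2]
    have e0 : blk T a = blk T (a-2) * tau T a 1 := by
      have := CONVG T n hc a 0 (by omega) han
      simpa [tau] using this
    have e1 : tau T a 1 * blk T (a-1) = blk T (a-3) * tau T a 2 := by
      have := CONVG T n hc a 1 (by omega) han
      have h3 : a - 1 - 2 = a - 3 := by omega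
      rwa [h3] at this
    rw [s2, s1, ih a (by omega) han]
    calc CJ T a j * RS T a j 1 * blk T a * blk T (a-1)
        = CJ T a j * RS T a j 1 * (blk T (a-2) * (tau T a 1 * blk T (a-1))) := by
          rw [e0]; simp [mul_assoc]
      _ = CJ T a j * RS T a j 1 * (blk T (a-2) * (blk T (a-3) * tau T a 2)) := by rw [e1]
      _ = CJ T a j * (RS T a j 1 * (blk T (a - 2*1) * blk T (a - 2*1 - 1))) * tau T a 2 := by
          have h4 : a - 2 = a - 2*1 := by omega
          have h5 : a - 3 = a - 2*1 - 1 := by omega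
          rw [h4, h5]; simp [mul_assoc]
      _ = CJ T a j * ((blk T (a - 2*(1+j)) * blk T (a - 2*(1+j) - 1)) * RS T a j 2) *
            tau T a 2 := by rw [DESC T n hc j 1 a (by omega) (by omega) han]
      _ = CJ T a (j+1) * RS T a (j+1) 1 := by
          have h6 : 1 + j = j + 1 := by omega
          rw [h6]
          show CJ T a j * ((blk T (a - 2*(j+1)) * blk T (a - 2*(j+1) - 1)) * RS T a j 2) *
              tau T a 2 = (CJ T a j * (blk T (a - 2*(j+1)) * blk T (a - 2*(j+1) - 1))) *
              (RS T a j 2 * tau T a (2*1))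
          simp [mul_assoc]

include hc in
lemma SWEEP : ∀ s r a, r + s = a → 1 ≤ r → a ≤ n →
    tau T a r * Ch T s = Ch T (s - 2) * tau T a a := by
  intro s
  induction s with
  | zero =>
    intro r a h _ _
    have : r = a := by omega
    subst this
    simp [Ch]
  | succ s ih =>
    intro r a h hr han
    show tau T a r * (blk T (s+1) * Ch T s) = _
    rw [blk_eq T (s+1) (by omega)]
    calc tau T a r * (blk T (s+1-2) * T (s+1) * Ch T s)
        = (tau T a r * blk T (s-1)) * (T (s+1) * Ch T s) := by
          have h1 : s + 1 - 2 = s - 1 := by omega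
          rw [h1]; simp [mul_assoc]
      _ = (blk T (s-1) * tau T a r) * (T (s+1) * Ch T s) := by
          rw [comm_tau_blk T n hc r a (s-1) (by omega) han]
      _ = blk T (s-1) * ((tau T a r * T (s+1)) * Ch T s) := by simp [mul_assoc]
      _ = blk T (s-1) * (tau T a (r+1) * Ch T s) := by
          have h2 : T (s+1) = T (a - r) := by congr 1; omega
          rw [h2]; rfl
      _ = blk T (s-1) * (Ch T (s-2) * tau T a a) := by
          rw [ih (r+1) a (by omega) (by omega) han]
      _ = Ch T (s+1-2) * tau T a a := by
          have h3 : blk T (s-1) * Ch T (s-2) = Ch T (s-1) := by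
            have := bCh T (s-1)
            have h4 : s - 1 - 1 = s - 2 := by omega
            rwa [h4] at this
          have h5 : s + 1 - 2 = s - 1 := by omega
          rw [← mul_assoc, h3, h5]

lemma CHJ : ∀ j a, 2*j + 2 ≤ a → CJ T a j * Ch T (a - (2*j+2)) = Ch T (a - 2) := by
  intro j
  induction j with
  | zero => intro a _; simp [CJ]
  | succ j ih =>
    intro a hj
    show CJ T a j * (blk T (a - 2*(j+1)) * blk T (a - 2*(j+1) - 1)) * Ch T (a - (2*(j+1)+2)) = _
    have h1 : blk T (a - 2*(j+1) - 1) * Ch T (a - (2*(j+1)+2)) = Ch T (a - 2*(j+1) - 1) := by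
      have := bCh T (a - 2*(j+1) - 1)
      have h2 : a - 2*(j+1) - 1 - 1 = a - (2*(j+1)+2) := by omega
      rwa [h2] at this
    have h3 : blk T (a - 2*(j+1)) * Ch T (a - 2*(j+1) - 1) = Ch T (a - 2*(j+1)) := by
      have := bCh T (a - 2*(j+1))
      exact this
    calc CJ T a j * (blk T (a - 2*(j+1)) * blk T (a - 2*(j+1) - 1)) * Ch T (a - (2*(j+1)+2))
        = CJ T a j * (blk T (a - 2*(j+1)) * (blk T (a - 2*(j+1) - 1) *
            Ch T (a - (2*(j+1)+2)))) := by simp [mul_assoc]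
      _ = CJ T a j * Ch T (a - 2*(j+1)) := by rw [h1, h3]
      _ = Ch T (a - 2) := by
          have h4 : a - 2*(j+1) = a - (2*j+2) := by omega
          rw [h4]
          exact ih a (by omega)

lemma CJ_full_odd : ∀ a, a % 2 = 1 → CJ T a ((a-1)/2) = Ch T (a - 2) := by
  intro a ha
  rcases Nat.lt_or_ge a 3 with h | h
  · have : a = 1 := by omega
    subst this
    simp [CJ, Ch]
  · have hj : (a-1)/2 = ((a-1)/2 - 1) + 1 := by omega
    rw [hj]
    show CJ T a ((a-1)/2 - 1) * (blk T (a - 2*(((a-1)/2 - 1)+1)) *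
      blk T (a - 2*(((a-1)/2 - 1)+1) - 1)) = _
    have h1 : a - 2*(((a-1)/2 - 1)+1) = 1 := by omega
    have h2 : a - 2*(((a-1)/2 - 1)+1) - 1 = 0 := by omega
    rw [h2, h1]
    have h3 := CHJ T ((a-1)/2 - 1) a (by omega)
    have h4 : a - (2*((a-1)/2 - 1)+2) = 1 := by omega
    rw [h4] at h3
    calc CJ T a ((a-1)/2 - 1) * (blk T 1 * blk T 0)
        = CJ T a ((a-1)/2 - 1) * Ch T 1 := by simp [blk, Ch]
      _ = Ch T (a-2) := h3

lemma CJ_full_even : ∀ a, a % 2 = 0 → 2 ≤ a → CJ T a (a/2) = Ch T (a - 2) := by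
  intro a ha h2
  have hj : a/2 = (a/2 - 1) + 1 := by omega
  rw [hj]
  show CJ T a (a/2 - 1) * (blk T (a - 2*((a/2 - 1)+1)) * blk T (a - 2*((a/2 - 1)+1) - 1)) = _
  have h1 : a - 2*((a/2 - 1)+1) = 0 := by omega
  have h1' : a - 2*((a/2 - 1)+1) - 1 = 0 := by omega
  rw [h1', h1]
  have h3 := CHJ T (a/2 - 1) a (by omega)
  have h4 : a - (2*(a/2 - 1)+2) = 0 := by omega
  rw [h4] at h3
  calc CJ T a (a/2 - 1) * (blk T 0 * blk T 0)
      = CJ T a (a/2 - 1) * Ch T 0 := by simp [blk, Ch]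
    _ = Ch T (a-2) := h3


include hc in
lemma shapeA : ∀ a, a % 2 = 1 → 3 ≤ a → a ≤ n →
    altProd (blk T a) (blk T (a-1)) (a+1) =
      CJ T a ((a-1)/2) * (tau T a a * RS T a ((a-1)/2) 1) := by
  intro a ha h3 han
  set q := (a-1)/2 with hq
  have hq1 : 1 ≤ q := by omega
  have h2q : 2*q = a - 1 := by omega
  have s1 : altProd (blk T a) (blk T (a-1)) (2*q+1) =
      altProd (blk T a) (blk T (a-1)) (2*q) * blk T a := by
    rw [altProd_succ_right]; simp [Nat.mul_mod_right]
  have s2 : altProd (blk T a) (blk T (a-1)) (2*q+2) =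
      altProd (blk T a) (blk T (a-1)) (2*q+1) * blk T (a-1) := by
    have h1 : 2*q+2 = (2*q+1) + 1 := by omega
    rw [h1, altProd_succ_right]
    have hmod : (2*q+1) % 2 = 1 := by omega
    simp [hmod]
  have hap : a + 1 = 2*q+2 := by omega
  rw [hap, s2, s1, CORE T n hc q a (by omega) han]
  have e0 : blk T a = blk T (a-2) * tau T a 1 := by
    have := CONVG T n hc a 0 (by omega) han
    simpa [tau] using this
  have e1 : tau T a 1 * blk T (a-1) = blk T (a-3) * tau T a 2 := by
    have := CONVG T n hc a 1 (by omega) han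
    have h3' : a - 1 - 2 = a - 3 := by omega
    rwa [h3'] at this
  have etop : RS T a q 1 = tau T a (a-1) * RS T a (q-1) 1 := by
    have h4 : q = (q-1) + 1 := by omega
    rw [h4, RS_top]
    have h5 : 2*(1+(q-1)) = a - 1 := by omega
    rw [h5]
    simp
  have edesc : RS T a (q-1) 1 * (blk T (a - 2*1) * blk T (a - 2*1 - 1)) =
      (blk T (a - 2*(1+(q-1))) * blk T (a - 2*(1+(q-1)) - 1)) * RS T a (q-1) 2 :=
    DESC T n hc (q-1) 1 a (by omega) (by omega) han
  have h6 : a - 2*(1+(q-1)) = 1 := by omega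
  have h7 : a - 2*(1+(q-1)) - 1 = 0 := by omega
  rw [h7, h6] at edesc
  have h8 : a - 2*1 = a - 2 := by omega
  have h9 : a - 2*1 - 1 = a - 3 := by omega
  rw [h8, h9] at edesc
  have eabs : tau T a (a-1) * T 1 = tau T a a := by
    have h10 : tau T a ((a-1)+1) = tau T a (a-1) * T (a - (a-1)) := rfl
    rw [show a - (a-1) = 1 by omega, show (a-1)+1 = a by omega] at h10
    exact h10.symm
  have efin : RS T a (q-1) 2 * tau T a 2 = RS T a q 1 := by
    have h12 : q = (q-1)+1 := by omega
    rw [h12]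
    show _ = RS T a (q-1) 2 * tau T a (2*1)
    norm_num
  calc CJ T a q * RS T a q 1 * blk T a * blk T (a-1)
      = CJ T a q * (RS T a q 1 * (blk T (a-2) * (tau T a 1 * blk T (a-1)))) := by
        rw [e0]; simp [mul_assoc]
    _ = CJ T a q * (RS T a q 1 * (blk T (a-2) * (blk T (a-3) * tau T a 2))) := by rw [e1]
    _ = CJ T a q * ((tau T a (a-1) * (RS T a (q-1) 1 * (blk T (a-2) * blk T (a-3)))) *
          tau T a 2) := by rw [etop]; simp [mul_assoc]
    _ = CJ T a q * ((tau T a (a-1) * ((blk T 1 * blk T 0) * RS T a (q-1) 2)) *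
          tau T a 2) := by rw [edesc]
    _ = CJ T a q * ((tau T a (a-1) * T 1) * (RS T a (q-1) 2 * tau T a 2)) := by
        simp [blk, mul_assoc]
    _ = CJ T a q * (tau T a a * RS T a q 1) := by rw [eabs, efin]

include hc in
lemma shapeB : ∀ a, a % 2 = 0 → 2 ≤ a → a ≤ n →
    altProd (blk T a) (blk T (a-1)) (a+1) =
      CJ T a (a/2) * (tau T a a * OS T a (a/2) 0) := by
  intro a ha h2 han
  set q := a/2 with hq
  have hq1 : 1 ≤ q := by omega
  have h2q : 2*q = a := by omega
  have s1 : altProd (blk T a) (blk T (a-1)) (a+1) =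
      altProd (blk T a) (blk T (a-1)) a * blk T a := by
    rw [altProd_succ_right]
    have : a % 2 = 0 := ha
    simp [this]
  have score : altProd (blk T a) (blk T (a-1)) a = CJ T a q * RS T a q 1 := by
    have := CORE T n hc q a (by omega) han
    rwa [h2q] at this
  have etop : RS T a q 1 = tau T a a * RS T a (q-1) 1 := by
    have h4 : q = (q-1) + 1 := by omega
    rw [h4, RS_top]
    have h5 : 2*(1+(q-1)) = a := by omega
    rw [h5]
    simp
  have e0 : blk T a = blk T (a-2) * tau T a 1 := by
    have := CONVG T n hc a 0 (by omega) han
    simpa [tau] using this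
  have edesc : RS T a (q-1) 1 * blk T (a - 2*1) = blk T (a - 2*(1+(q-1))) * OS T a (q-1) 1 :=
    DESC1 T n hc (q-1) 1 a (by omega) (by omega) han
  have h6 : a - 2*(1+(q-1)) = 0 := by omega
  have h8 : a - 2*1 = a - 2 := by omega
  rw [h6, h8] at edesc
  have efin : OS T a (q-1) 1 * tau T a 1 = OS T a q 0 := by
    have h12 : q = (q-1)+1 := by omega
    rw [h12]
    show _ = OS T a ((q-1)+1) 0
    show _ = OS T a (q-1) 1 * tau T a (2*0+1)
    norm_num
  rw [s1, score]
  calc CJ T a q * RS T a q 1 * blk T a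
      = CJ T a q * (tau T a a * ((RS T a (q-1) 1 * blk T (a-2)) * tau T a 1)) := by
        rw [etop, e0]; simp [mul_assoc]
    _ = CJ T a q * (tau T a a * ((blk T 0 * OS T a (q-1) 1) * tau T a 1)) := by rw [edesc]
    _ = CJ T a q * (tau T a a * (OS T a (q-1) 1 * tau T a 1)) := by simp [blk]
    _ = CJ T a q * (tau T a a * OS T a q 0) := by rw [efin]

include hc in
lemma shapeC : ∀ a, a % 2 = 0 → 2 ≤ a → a ≤ n →
    altProd (blk T (a-1)) (blk T a) (a+1) =
      blk T (a-1) * (CJ T a (a/2) * RS T a (a/2) 1) := by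
  intro a ha h2 han
  show blk T (a-1) * altProd (blk T a) (blk T (a-1)) a = _
  congr 1
  have := CORE T n hc (a/2) a (by omega) han
  have h2q : 2*(a/2) = a := by omega
  rwa [h2q] at this

include hc in
lemma shapeD : ∀ a, a % 2 = 1 → 3 ≤ a → a ≤ n →
    altProd (blk T (a-1)) (blk T a) (a+1) =
      blk T (a-1) * (CJ T a ((a-1)/2) * OS T a ((a-1)/2 + 1) 0) := by
  intro a ha h3 han
  set q := (a-1)/2 with hq
  have h2q : 2*q = a - 1 := by omega
  show blk T (a-1) * altProd (blk T a) (blk T (a-1)) a = _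
  congr 1
  have s1 : altProd (blk T a) (blk T (a-1)) a =
      altProd (blk T a) (blk T (a-1)) (a-1) * blk T a := by
    obtain ⟨b, hb⟩ : ∃ b, a = b + 1 := ⟨a-1, by omega⟩
    have hb' : a - 1 = b := by omega
    have hmod : b % 2 = 0 := by omega
    rw [hb', hb, altProd_succ_right]
    simp [hmod]
  have score : altProd (blk T a) (blk T (a-1)) (a-1) = CJ T a q * RS T a q 1 := by
    have := CORE T n hc q a (by omega) han
    rwa [h2q] at this
  have e0 : blk T a = blk T (a-2) * tau T a 1 := by
    have := CONVG T n hc a 0 (by omega) han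
    simpa [tau] using this
  have edesc : RS T a q 1 * blk T (a - 2*1) = blk T (a - 2*(1+q)) * OS T a q 1 :=
    DESC1 T n hc q 1 a (by omega) (by omega) han
  have h6 : a - 2*(1+q) = 0 := by omega
  have h8 : a - 2*1 = a - 2 := by omega
  rw [h6, h8] at edesc
  have efin : OS T a q 1 * tau T a 1 = OS T a (q+1) 0 := by
    show _ = OS T a (q+1) 0
    show _ = OS T a q 1 * tau T a (2*0+1)
    norm_num
  rw [s1, score]
  calc CJ T a q * RS T a q 1 * blk T a
      = CJ T a q * ((RS T a q 1 * blk T (a-2)) * tau T a 1) := by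
        rw [e0]; simp [mul_assoc]
    _ = CJ T a q * ((blk T 0 * OS T a q 1) * tau T a 1) := by rw [edesc]
    _ = CJ T a q * (OS T a q 1 * tau T a 1) := by simp [blk]
    _ = CJ T a q * OS T a (q+1) 0 := by rw [efin]


include hc in
lemma Ch_split : ∀ b, 1 ≤ b → b ≤ n → Ch T b = Ch T (b-2) * tau T b b := by
  intro b h1 h2
  have e1 : blk T b * Ch T (b-1) = Ch T b := bCh T b
  rw [← e1, blk_eq T b h1, ← tau_one T b, mul_assoc,
    SWEEP T n hc (b-1) 1 b (by omega) (by omega) h2, ← mul_assoc]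
  congr 1
  have e2 := bCh T (b-2)
  have h3 : b - 2 - 1 = b - 1 - 2 := by omega
  rw [h3] at e2
  exact e2

include hb hc in
lemma MAIN : ∀ m, 1 ≤ m → m ≤ n →
    altProd (blk T m) (blk T (m-1)) (m+1) = DD T m ∧
    altProd (blk T (m-1)) (blk T m) (m+1) = DD T m := by
  intro m
  induction m with
  | zero => intro h _; omega
  | succ m ih =>
    intro _ hMn
    match m, ih, hMn with
    | 0, _, _ =>
      constructor <;> simp [altProd, blk, DD, tau]
    | 1, _, hMn =>
      constructor
      · show blk T 2 * (blk T 1 * (blk T 2 * 1)) = DD T 2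
        have hbr := hb 1 (by omega) (by omega)
        simp only [blk, DD, tau, one_mul, mul_one]
        norm_num
        calc T 2 * (T 1 * T 2) = T 2 * T 1 * T 2 := by rw [mul_assoc]
          _ = T 1 * T 2 * T 1 := hbr.symm
          _ = T 1 * (T 2 * T 1) := by rw [mul_assoc]
      · show blk T 1 * (blk T 2 * (blk T 1 * 1)) = DD T 2
        simp [blk, DD, tau, mul_assoc]
    | (m'+2), ih, hMn =>
      have hm2 : 2 ≤ m'+2 := by omega
      have hmn : m'+2 ≤ n := by omega
      obtain ⟨Z1, Z2⟩ := ih (by omega) hmn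
      generalize hmdef : m' + 2 = m at *
      have hm2' : 2 ≤ m := hm2
      rcases Nat.even_or_odd (m+1) with hpar | hpar
      · -- M = m+1 even, m odd ≥ 3
        have hMe : (m+1) % 2 = 0 := Nat.even_iff.mp hpar
        have hmo : m % 2 = 1 := by omega
        have hq : (m-1)/2 = (m+1)/2 - 1 := by omega
        constructor
        · -- SHAPE B side
          rw [shapeB T n hc (m+1) hMe (by omega) hMn]
          have e1 : tau T (m+1) (m+1) * OS T (m+1) ((m+1)/2) 0 =
              OS T m ((m+1)/2) 0 * tau T (m+1) (m+1) :=
            shift_OS T n hb hc ((m+1)/2) 0 m (by omega) (by omega)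
          have e2 : OS T m ((m+1)/2) 0 = tau T m m * OS T m ((m-1)/2) 0 := by
            have h := OS_top T m ((m-1)/2) 0
            rw [show (m-1)/2+1 = (m+1)/2 from by omega,
              show 2*(0+(m-1)/2)+1 = m from by omega] at h
            exact h
          have e3 : CJ T (m+1) ((m+1)/2) = blk T (m-1) * CJ T m ((m-1)/2) := by
            rw [CJ_full_even T (m+1) hMe (by omega), CJ_full_odd T m hmo]
            have e4 := bCh T (m-1)
            rw [show m-1-1 = m-2 from by omega] at e4
            rw [show m+1-2 = m-1 from by omega, ← e4]
          have e5 : DD T m = blk T (m-1) *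
              (CJ T m ((m-1)/2) * (tau T m m * OS T m ((m-1)/2) 0)) := by
            rw [← Z2, shapeD T n hc m hmo (by omega) hmn]
            congr 2
            have h := OS_top T m ((m-1)/2) 0
            rw [show 2*(0+(m-1)/2)+1 = m from by omega] at h
            exact h
          show CJ T (m+1) ((m+1)/2) * (tau T (m+1) (m+1) * OS T (m+1) ((m+1)/2) 0) =
            DD T m * tau T (m+1) (m+1)
          rw [e1, ← mul_assoc, e3, e2, e5]
          simp [mul_assoc]
        · -- SHAPE C side
          rw [shapeC T n hc (m+1) hMe (by omega) hMn]
          have rtop : RS T (m+1) ((m+1)/2) 1 =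
              tau T (m+1) (m+1) * RS T (m+1) ((m-1)/2) 1 := by
            have h := RS_top T (m+1) ((m-1)/2) 1
            rw [show (m-1)/2+1 = (m+1)/2 from by omega,
              show 2*(1+(m-1)/2) = m+1 from by omega] at h
            exact h
          have e1 : tau T (m+1) (m+1) * RS T (m+1) ((m-1)/2) 1 =
              RS T m ((m-1)/2) 1 * tau T (m+1) (m+1) :=
            shift_RS T n hb hc ((m-1)/2) 1 m (by omega) (by omega)
          have e3 : blk T m * CJ T (m+1) ((m+1)/2) = Ch T (m-2) * tau T m m := by
            rw [CJ_full_even T (m+1) hMe (by omega),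
              show m+1-2 = m-1 from by omega, bCh T m, Ch_split T n hc m (by omega) hmn]
          have e5 : DD T m = Ch T (m-2) * (tau T m m * RS T m ((m-1)/2) 1) := by
            rw [← Z1, shapeA T n hc m hmo (by omega) hmn, CJ_full_odd T m hmo]
          show blk T (m+1-1) * (CJ T (m+1) ((m+1)/2) * RS T (m+1) ((m+1)/2) 1) =
            DD T m * tau T (m+1) (m+1)
          rw [show m+1-1 = m from rfl, rtop, e1, e5]
          rw [← mul_assoc, ← mul_assoc, e3]
          simp [mul_assoc]
      · -- M = m+1 odd, m even ≥ 2
        have hMo : (m+1) % 2 = 1 := Nat.odd_iff.mp hpar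
        have hme : m % 2 = 0 := by omega
        have hq : (m+1-1)/2 = m/2 := by omega
        constructor
        · -- SHAPE A side
          rw [shapeA T n hc (m+1) hMo (by omega) hMn, hq]
          have e1 : tau T (m+1) (m+1) * RS T (m+1) (m/2) 1 =
              RS T m (m/2) 1 * tau T (m+1) (m+1) :=
            shift_RS T n hb hc (m/2) 1 m (by omega) (by omega)
          have e3 : CJ T (m+1) (m/2) = blk T (m-1) * CJ T m (m/2) := by
            have h := CJ_full_odd T (m+1) hMo
            rw [hq] at h
            rw [h, show m+1-2 = m-1 from by omega, CJ_full_even T m hme (by omega)]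
            have e4 := bCh T (m-1)
            rw [show m-1-1 = m-2 from by omega] at e4
            rw [← e4]
          have e5 : DD T m = blk T (m-1) * (CJ T m (m/2) * RS T m (m/2) 1) := by
            rw [← Z2, shapeC T n hc m hme (by omega) hmn]
          show CJ T (m+1) (m/2) * (tau T (m+1) (m+1) * RS T (m+1) (m/2) 1) =
            DD T m * tau T (m+1) (m+1)
          rw [e1, ← mul_assoc, e3, e5]
          simp [mul_assoc]
        · -- SHAPE D side
          rw [shapeD T n hc (m+1) hMo (by omega) hMn, hq]
          have otop : OS T (m+1) (m/2+1) 0 = tau T (m+1) (m+1) * OS T (m+1) (m/2) 0 := by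
            have h := OS_top T (m+1) (m/2) 0
            rw [show 2*(0+m/2)+1 = m+1 from by omega] at h
            exact h
          have e1 : tau T (m+1) (m+1) * OS T (m+1) (m/2) 0 =
              OS T m (m/2) 0 * tau T (m+1) (m+1) :=
            shift_OS T n hb hc (m/2) 0 m (by omega) (by omega)
          have e3 : blk T m * CJ T (m+1) (m/2) = Ch T (m-2) * tau T m m := by
            have h := CJ_full_odd T (m+1) hMo
            rw [hq] at h
            rw [h, show m+1-2 = m-1 from by omega, bCh T m,
              Ch_split T n hc m (by omega) hmn]
          have e5 : DD T m = Ch T (m-2) * (tau T m m * OS T m (m/2) 0) := by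
            rw [← Z1, shapeB T n hc m hme (by omega) hmn, CJ_full_even T m hme (by omega)]
          show blk T (m+1-1) * (CJ T (m+1) (m/2) * OS T (m+1) (m/2+1) 0) =
            DD T m * tau T (m+1) (m+1)
          rw [show m+1-1 = m from rfl, otop, e1, e5]
          rw [← mul_assoc, ← mul_assoc, e3]
          simp [mul_assoc]

end WithRel

lemma prod_odd (T : ℕ → G) : ∀ r, ((List.range r).map (fun i => T (2*i+1))).prod =
    blk T (2*r - 1) := by
  intro r
  induction r with
  | zero => simp [blk]
  | succ r ih =>
    rw [List.range_succ, List.map_append, List.prod_append, ih]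
    simp only [List.map_cons, List.map_nil, List.prod_cons, List.prod_nil, mul_one]
    rw [show 2*(r+1)-1 = 2*r+1 from by omega, blk_eq T (2*r+1) (by omega),
      show 2*r+1-2 = 2*r-1 from by omega]
  
lemma prod_even (T : ℕ → G) : ∀ r, ((List.range r).map (fun i => T (2*i+2))).prod =
    blk T (2*r) := by
  intro r
  induction r with
  | zero => simp [blk]
  | succ r ih =>
    rw [List.range_succ, List.map_append, List.prod_append, ih]
    simp only [List.map_cons, List.map_nil, List.prod_cons, List.prod_nil, mul_one]
    rw [show 2*(r+1) = 2*r+2 from by omega, blk_eq T (2*r+2) (by omega),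
      show 2*r+2-2 = 2*r from by omega]

end FoldA

theorem folding_A_artin_relation {G : Type*} [Group G] (k : ℕ) (hk : 3 ≤ k) (T : ℕ → G)
    (hbraid : ∀ i, 1 ≤ i → i + 1 ≤ k - 1 → T i * T (i + 1) * T i = T (i + 1) * T i * T (i + 1))
    (hcomm : ∀ i j, 1 ≤ i → i + 2 ≤ j → j ≤ k - 1 → T i * T j = T j * T i) :
    altProd (((List.range (k / 2)).map (fun i => T (2 * i + 1))).prod)
        (((List.range ((k - 1) / 2)).map (fun i => T (2 * i + 2))).prod) k
      = altProd (((List.range ((k - 1) / 2)).map (fun i => T (2 * i + 2))).prod)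
        (((List.range (k / 2)).map (fun i => T (2 * i + 1))).prod) k := by
  have hpo : ((List.range (k/2)).map (fun i => T (2 * i + 1))).prod = FoldA.blk T (2*(k/2) - 1) :=
    FoldA.prod_odd T (k/2)
  have hpe : ((List.range ((k-1)/2)).map (fun i => T (2 * i + 2))).prod =
      FoldA.blk T (2*((k-1)/2)) := FoldA.prod_even T ((k-1)/2)
  rw [hpo, hpe]
  obtain ⟨A, B⟩ := FoldA.MAIN T (k-1) hbraid hcomm (k-1) (by omega) (le_refl (k-1))
  rcases Nat.even_or_odd k with hk2 | hk2
  · have hke : k % 2 = 0 := Nat.even_iff.mp hk2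
    have h1 : 2*(k/2) - 1 = k - 1 := by omega
    have h2 : 2*((k-1)/2) = k - 1 - 1 := by omega
    rw [h1, h2]
    rw [show k - 1 + 1 = k from by omega] at A B
    exact A.trans B.symm
  · have hke : k % 2 = 1 := Nat.odd_iff.mp hk2
    have h1 : 2*(k/2) - 1 = k - 1 - 1 := by omega
    have h2 : 2*((k-1)/2) = k - 1 := by omega
    rw [h1, h2]
    rw [show k - 1 + 1 = k from by omega] at A B
    exact B.trans A.symm
end

section
/- Let k ≥ 4 and let G be a group containing T₁, …, T_k satisfying the type-D_k Artin relations: TᵢTⱼTᵢ = TⱼTᵢTⱼ when the corresponding vertices are adjacent in the Coxeter graph D_k (i.e., for consecutive i,j ≤ k−1 with |i−j|=1, and for the pairs (k−2, k)), and TᵢTⱼ = TⱼTᵢ otherwise (in particular T_{k−1}T_k = T_kT_{k−1}). For k even set x = T₁T₃⋯T_{k−3}T_{k−1}T_k and y = T₂T₄⋯T_{k−2}; for k odd set x = T₁T₃⋯T_{k−2} and y = T₂T₄⋯T_{k−3}T_{k−1}T_k. Then prod(x,y;2k−2) = prod(y,x;2k−2). -/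
namespace FoldAux

variable {G : Type*} [Group G]

/-- ascending segment `a i * a (i+1) * ⋯ * a (i+n-1)` -/
def seg (a : ℕ → G) : ℕ → ℕ → G
  | _, 0 => 1
  | i, n+1 => a i * seg a (i+1) n

/-- descending-by-2 product `a t * a (t-2) * ⋯` with `n` factors -/
def dsc (a : ℕ → G) : ℕ → ℕ → G
  | _, 0 => 1
  | t, n+1 => a t * dsc a (t-2) n

/-- riffle -/
def rif (a : ℕ → G) : ℕ → G
  | 0 => 1
  | 1 => a 1
  | n+2 => a (n+1) * a (n+2) * rif a n

theorem seg_zero (a : ℕ → G) (i : ℕ) : seg a i 0 = 1 := rfl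
theorem seg_succ (a : ℕ → G) (i n : ℕ) : seg a i (n+1) = a i * seg a (i+1) n := rfl
theorem seg_add_two (a : ℕ → G) (i n : ℕ) :
    seg a i (n+2) = a i * (a (i+1) * seg a (i+2) n) := rfl
theorem dsc_zero (a : ℕ → G) (t : ℕ) : dsc a t 0 = 1 := rfl
theorem dsc_succ (a : ℕ → G) (t n : ℕ) : dsc a t (n+1) = a t * dsc a (t-2) n := rfl
theorem rif_zero (a : ℕ → G) : rif a 0 = 1 := rfl
theorem rif_one (a : ℕ → G) : rif a 1 = a 1 := rfl
theorem rif_add_two (a : ℕ → G) (n : ℕ) :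
    rif a (n+2) = a (n+1) * a (n+2) * rif a n := rfl

theorem seg_split (a : ℕ → G) (n1 n2 i : ℕ) :
    seg a i (n1 + n2) = seg a i n1 * seg a (i + n1) n2 := by
  induction n1 generalizing i with
  | zero => simp [seg]
  | succ n ih =>
      have h1 : n + 1 + n2 = (n + n2) + 1 := by omega
      have h2 : i + (n + 1) = (i + 1) + n := by omega
      rw [h1, seg_succ, seg_succ, ih (i+1), mul_assoc, h2]

theorem commute_seg {x : G} (a : ℕ → G) (i n : ℕ)
    (h : ∀ s, i ≤ s → s < i + n → Commute x (a s)) : Commute x (seg a i n) := by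
  induction n generalizing i with
  | zero => simp [seg]
  | succ n ih =>
      rw [seg_succ]
      exact (h i le_rfl (by omega)).mul_right
        (ih (i+1) (fun s h1 h2 => h s (by omega) (by omega)))

theorem commute_dsc {x : G} (a : ℕ → G) (t n : ℕ)
    (h : ∀ s, 1 ≤ s → s ≤ t → Commute x (a s)) (hn : 2 * n ≤ t + 1) :
    Commute x (dsc a t n) := by
  induction n generalizing t with
  | zero => simp [dsc]
  | succ n ih =>
      rw [dsc_succ]
      exact (h t (by omega) le_rfl).mul_right
        (ih (t-2) (fun s h1 h2 => h s h1 (by omega)) (by omega))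

theorem commute_rif {x : G} (a : ℕ → G) (t : ℕ)
    (h : ∀ s, 1 ≤ s → s ≤ t → Commute x (a s)) : Commute x (rif a t) := by
  induction t using Nat.strong_induction_on with
  | _ t ih =>
    match t with
    | 0 => simp [rif]
    | 1 => exact h 1 le_rfl le_rfl
    | (n+2) =>
        rw [rif_add_two]
        exact ((h (n+1) (by omega) (by omega)).mul_right
          (h (n+2) (by omega) (by omega))).mul_right
          (ih n (by omega) (fun s h1 h2 => h s h1 (by omega)))

section Master

variable (a : ℕ → G) (m : ℕ)

/-- the linear Coxeter element shifts middle generators -/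
theorem shift (hb : ∀ i, 2 ≤ i → i + 1 ≤ m → a i * a (i+1) * a i = a (i+1) * a i * a (i+1))
    (hc : ∀ i j, 1 ≤ i → i + 2 ≤ j → j ≤ m → a i * a j = a j * a i)
    (i : ℕ) (h2 : 2 ≤ i) (hi : i + 1 ≤ m) :
    seg a 1 m * a i = a (i+1) * seg a 1 m := by
  have e0 := seg_split a (i-1) (m-i-1+2) 1
  rw [show (i-1) + (m-i-1+2) = m by omega, show 1 + (i-1) = i by omega, seg_add_two] at e0
  have cR : Commute (a i) (seg a (i+2) (m-i-1)) :=
    commute_seg a (i+2) (m-i-1) (fun s hs1 hs2 => hc i s (by omega) (by omega) (by omega))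
  have cL : Commute (a (i+1)) (seg a 1 (i-1)) :=
    commute_seg a 1 (i-1) (fun s hs1 hs2 => (hc s (i+1) (by omega) (by omega) (by omega)).symm)
  rw [e0]
  simp only [mul_assoc]
  rw [← cR.eq]
  simp only [← mul_assoc]
  rw [mul_assoc (seg a 1 (i-1)) , mul_assoc (seg a 1 (i-1)), hb i h2 hi]
  simp only [← mul_assoc]
  rw [← cL.eq]

/-- the classical type-A identity `a s * (seg(s+1,n) * seg(s,n+1)) = (...) * a (s+n)` -/
theorem typeA (hb : ∀ i, 2 ≤ i → i + 1 ≤ m → a i * a (i+1) * a i = a (i+1) * a i * a (i+1))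
    (hc : ∀ i j, 1 ≤ i → i + 2 ≤ j → j ≤ m → a i * a j = a j * a i)
    (n : ℕ) : ∀ s, 2 ≤ s → s + n + 1 ≤ m + 1 →
    a s * (seg a (s+1) n * seg a s (n+1)) = (seg a (s+1) n * seg a s (n+1)) * a (s + n) := by
  induction n with
  | zero => intro s h2 hm'; simp [seg]
  | succ n ih =>
      intro s h2 hsm
      have cm : Commute (a s) (seg a (s+2) n) :=
        commute_seg a (s+2) n (fun t ht1 ht2 => hc s t (by omega) (by omega) (by omega))
      have k1 : seg a s (n+2) = a s * seg a (s+1) (n+1) := seg_succ a s (n+1)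
      have k2 : seg a (s+1) (n+1) = a (s+1) * seg a (s+2) n := by
        have := seg_succ a (s+1) n
        rwa [show s+1+1 = s+2 by omega] at this
      have key : seg a (s+1) (n+1) * seg a s (n+2) =
          a (s+1) * (a s * (seg a (s+2) n * seg a (s+1) (n+1))) := by
        rw [k1]
        nth_rewrite 1 [k2]
        simp only [mul_assoc]
        rw [(cm.symm).left_comm]
      rw [key]
      have hbT : ∀ x : G, a s * (a (s+1) * (a s * x)) = a (s+1) * (a s * (a (s+1) * x)) := by
        intro x
        simp only [← mul_assoc]
        rw [hb s h2 (by omega)]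
      rw [hbT]
      have ihs := ih (s+1) (by omega) (by omega)
      rw [mul_assoc] at ihs ⊢
      rw [ihs]
      simp only [← mul_assoc]
      rw [show s+1+n = s+(n+1) by omega]

/-- key relation: `a 2 * τ² = τ² * a m` -/
theorem f2 (hm : 3 ≤ m)
    (hb : ∀ i, 2 ≤ i → i + 1 ≤ m → a i * a (i+1) * a i = a (i+1) * a i * a (i+1))
    (h4 : a 1 * a 2 * a 1 * a 2 = a 2 * a 1 * a 2 * a 1)
    (hc : ∀ i j, 1 ≤ i → i + 2 ≤ j → j ≤ m → a i * a j = a j * a i) :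
    a 2 * (seg a 1 m * seg a 1 m) = (seg a 1 m * seg a 1 m) * a m := by
  have e1 : seg a 1 m = a 1 * (a 2 * seg a 3 (m-2)) := by
    have := seg_add_two a 1 (m-2)
    rw [show (m-2)+2 = m by omega] at this
    rw [this]
  have e2 : seg a 1 m = a 1 * seg a 2 (m-1) := by
    have := seg_succ a 1 (m-1)
    rw [show (m-1)+1 = m by omega] at this
    rw [this]
  have c1 : Commute (a 1) (seg a 3 (m-2)) :=
    commute_seg a 3 (m-2) (fun s hs1 hs2 => hc 1 s (by omega) (by omega) (by omega))
  have tA := typeA a m hb hc (m-2) 2 (by omega) (by omega)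
  rw [show (2:ℕ)+1 = 3 by norm_num, show (m-2)+1 = m-1 by omega,
      show 2+(m-2) = m by omega] at tA
  -- τ² = a 1 * a 2 * a 1 * (seg a 3 (m-2) * seg a 2 (m-1))
  have eSq : seg a 1 m * seg a 1 m
      = a 1 * a 2 * a 1 * (seg a 3 (m-2) * seg a 2 (m-1)) := by
    nth_rewrite 1 [e1]
    nth_rewrite 1 [e2]
    simp only [mul_assoc]
    rw [(c1.symm).left_comm]
  rw [eSq]
  simp only [← mul_assoc]
  rw [← h4]
  simp only [mul_assoc]
  rw [tA]
  simp only [mul_assoc]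

theorem pow_shift (hb : ∀ i, 2 ≤ i → i + 1 ≤ m → a i * a (i+1) * a i = a (i+1) * a i * a (i+1))
    (hc : ∀ i j, 1 ≤ i → i + 2 ≤ j → j ≤ m → a i * a j = a j * a i)
    (d : ℕ) : ∀ i, 2 ≤ i → i + d ≤ m →
    (seg a 1 m)^d * a i = a (i + d) * (seg a 1 m)^d := by
  induction d with
  | zero => intro i _ _; simp
  | succ d ih =>
      intro i h2 hid
      rw [pow_succ, mul_assoc, shift a m hb hc i h2 (by omega), ← mul_assoc,
          ih (i+1) (by omega) (by omega), show i+1+d = i+(d+1) by omega,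
          mul_assoc]

theorem cent2 (hm : 3 ≤ m)
    (hb : ∀ i, 2 ≤ i → i + 1 ≤ m → a i * a (i+1) * a i = a (i+1) * a i * a (i+1))
    (h4 : a 1 * a 2 * a 1 * a 2 = a 2 * a 1 * a 2 * a 1)
    (hc : ∀ i j, 1 ≤ i → i + 2 ≤ j → j ≤ m → a i * a j = a j * a i)
    (i : ℕ) (h2 : 2 ≤ i) (him : i ≤ m) :
    Commute ((seg a 1 m)^m) (a i) := by
  show (seg a 1 m)^m * a i = a i * (seg a 1 m)^m
  have hsplit : (seg a 1 m)^m
      = (seg a 1 m)^(i-2) * ((seg a 1 m)^2 * (seg a 1 m)^(m-i)) := by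
    rw [← pow_add, ← pow_add]
    congr 1
    omega
  have f2' : (seg a 1 m)^2 * a m = a 2 * (seg a 1 m)^2 := by
    rw [pow_two]
    exact (f2 a m hm hb h4 hc).symm
  rw [hsplit]
  simp only [mul_assoc]
  rw [pow_shift a m hb hc (m-i) i h2 (by omega), show i+(m-i) = m by omega,
      ← mul_assoc ((seg a 1 m)^2), f2', mul_assoc, ← mul_assoc ((seg a 1 m)^(i-2)),
      pow_shift a m hb hc (i-2) 2 le_rfl (by omega), show 2+(i-2) = i by omega]
  simp only [mul_assoc]

theorem cent (hm : 3 ≤ m)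
    (hb : ∀ i, 2 ≤ i → i + 1 ≤ m → a i * a (i+1) * a i = a (i+1) * a i * a (i+1))
    (h4 : a 1 * a 2 * a 1 * a 2 = a 2 * a 1 * a 2 * a 1)
    (hc : ∀ i j, 1 ≤ i → i + 2 ≤ j → j ≤ m → a i * a j = a j * a i)
    (i : ℕ) (h1 : 1 ≤ i) (him : i ≤ m) :
    Commute ((seg a 1 m)^m) (a i) := by
  rcases Nat.lt_or_ge i 2 with hi | hi
  · -- i = 1
    have hi1 : i = 1 := by omega
    subst hi1
    have e2 : seg a 1 m = a 1 * seg a 2 (m-1) := by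
      have := seg_succ a 1 (m-1)
      rw [show (m-1)+1 = m by omega] at this
      rw [this]
    have ea : a 1 = seg a 1 m * (seg a 2 (m-1))⁻¹ := by
      rw [e2, mul_assoc, mul_inv_cancel, mul_one]
    rw [ea]
    have ct : Commute ((seg a 1 m)^m) (seg a 1 m) := (Commute.refl _).pow_left m
    have cs : Commute ((seg a 1 m)^m) (seg a 2 (m-1)) :=
      commute_seg a 2 (m-1)
        (fun s hs1 hs2 => cent2 a m hm hb h4 hc s hs1 (by omega))
    exact ct.mul_right cs.inv_right
  · exact cent2 a m hm hb h4 hc i hi him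

theorem rifeq (hc : ∀ i j, 1 ≤ i → i + 2 ≤ j → j ≤ m → a i * a j = a j * a i)
    (j : ℕ) : j ≤ m → dsc a (j-1) (j/2) * dsc a j ((j+1)/2) = rif a j := by
  induction j using Nat.strong_induction_on with
  | _ j ih =>
    match j, ih with
    | 0, _ => intro _; norm_num [dsc, rif]
    | 1, _ => intro _; norm_num [dsc, rif]
    | (n+2), ih =>
      intro hj
      rw [show n+2-1 = n+1 by omega, show (n+2)/2 = n/2+1 by omega,
          show (n+2+1)/2 = (n+1)/2+1 by omega, dsc_succ, dsc_succ,
          show n+1-2 = n-1 by omega, show n+2-2 = n by omega, rif_add_two]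
      have cD : Commute (a (n+2)) (dsc a (n-1) (n/2)) :=
        commute_dsc a (n-1) (n/2)
          (fun s h1 h2 => (hc s (n+2) h1 (by omega) (by omega)).symm) (by omega)
      simp only [mul_assoc]
      rw [(cD.symm).left_comm, ih n (by omega) (by omega)]

theorem conj (hm : 3 ≤ m)
    (hb : ∀ i, 2 ≤ i → i + 1 ≤ m → a i * a (i+1) * a i = a (i+1) * a i * a (i+1))
    (h4 : a 1 * a 2 * a 1 * a 2 = a 2 * a 1 * a 2 * a 1)
    (hc : ∀ i j, 1 ≤ i → i + 2 ≤ j → j ≤ m → a i * a j = a j * a i)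
    (n : ℕ) : ∀ c, 1 ≤ c → c ≤ 2 → c + 2*n ≤ m + 1 →
    ∃ g : G, Commute ((seg a 1 m)^m) g ∧
      rif a (c + 2*n - 1) * seg a (c + 2*n) (m + 1 - (c + 2*n)) = g * seg a 1 m * g⁻¹ := by
  induction n with
  | zero =>
      intro c h1 h2c hcm
      refine ⟨1, Commute.one_right _, ?_⟩
      rw [one_mul, inv_one, mul_one]
      have : c = 1 ∨ c = 2 := by omega
      rcases this with rfl | rfl
      · rw [show (1:ℕ)+2*0-1 = 0 by norm_num, show (1:ℕ)+2*0 = 1 by norm_num,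
            rif_zero, one_mul, show m+1-1 = m by omega]
      · rw [show (2:ℕ)+2*0-1 = 1 by norm_num, show (2:ℕ)+2*0 = 2 by norm_num,
            rif_one, show m+1-2 = m-1 by omega]
        have e2 : seg a 1 m = a 1 * seg a 2 (m-1) := by
          have := seg_succ a 1 (m-1)
          rw [show (m-1)+1 = m by omega] at this
          rw [this]
        rw [← e2]
  | succ n ih =>
      intro c h1 h2c hcm
      obtain ⟨g, hg, he⟩ := ih c h1 h2c (by omega)
      have eB : seg a (c+2*n) (m+1-(c+2*n))
          = a (c+2*n) * (a (c+2*n+1) * seg a (c+2*n+2) (m+1-(c+2*n+2))) := by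
        have := seg_add_two a (c+2*n) (m+1-(c+2*n+2))
        rw [show m+1-(c+2*n+2)+2 = m+1-(c+2*n) by omega,
            show c+2*n+1+1 = c+2*n+2 by omega] at this
        rw [this]
      have cRif : Commute (rif a (c+2*n-1)) (seg a (c+2*n+2) (m+1-(c+2*n+2))) :=
        commute_seg a (c+2*n+2) (m+1-(c+2*n+2)) (fun s hs1 hs2 =>
          (commute_rif a (c+2*n-1) (fun t ht1 ht2 =>
            (hc t s (by omega) (by omega) (by omega)).symm)).symm)
      have eRif : rif a (c+2*n+1) = a (c+2*n) * a (c+2*n+1) * rif a (c+2*n-1) := by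
        have := rif_add_two a (c+2*n-1)
        rw [show c+2*n-1+2 = c+2*n+1 by omega, show c+2*n-1+1 = c+2*n by omega] at this
        rw [this]
      have hBr : seg a (c+2*n) (m+1-(c+2*n)) * rif a (c+2*n-1)
          = rif a (c+2*n+1) * seg a (c+2*n+2) (m+1-(c+2*n+2)) := by
        rw [eB, eRif]
        simp only [mul_assoc]
        rw [← cRif.eq]
      have hgB : Commute ((seg a 1 m)^m) (seg a (c+2*n) (m+1-(c+2*n))) :=
        commute_seg a (c+2*n) (m+1-(c+2*n)) (fun s hs1 hs2 =>
          cent a m hm hb h4 hc s (by omega) (by omega))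
      refine ⟨seg a (c+2*n) (m+1-(c+2*n)) * g, hgB.mul_right hg, ?_⟩
      rw [show c+2*(n+1)-1 = c+2*n+1 by omega, show c+2*(n+1) = c+2*n+2 by omega]
      have hrr : rif a (c+2*n-1)
          = g * seg a 1 m * g⁻¹ * (seg a (c+2*n) (m+1-(c+2*n)))⁻¹ := by
        rw [← he, mul_assoc, mul_inv_cancel, mul_one]
      calc rif a (c+2*n+1) * seg a (c+2*n+2) (m+1-(c+2*n+2))
          = seg a (c+2*n) (m+1-(c+2*n)) * rif a (c+2*n-1) := hBr.symm
        _ = seg a (c+2*n) (m+1-(c+2*n)) * g * seg a 1 m *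
              (seg a (c+2*n) (m+1-(c+2*n)) * g)⁻¹ := by
            rw [hrr, mul_inv_rev]
            simp only [mul_assoc]

theorem conj_pow_aux (x y : G) (r : ℕ) : (x * y * x⁻¹)^r = x * y^r * x⁻¹ := by
  induction r with
  | zero => simp
  | succ r ih => rw [pow_succ, ih, pow_succ]; group

theorem master (hm : 3 ≤ m)
    (hb : ∀ i, 2 ≤ i → i + 1 ≤ m → a i * a (i+1) * a i = a (i+1) * a i * a (i+1))
    (h4 : a 1 * a 2 * a 1 * a 2 = a 2 * a 1 * a 2 * a 1)
    (hc : ∀ i j, 1 ≤ i → i + 2 ≤ j → j ≤ m → a i * a j = a j * a i) :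
    (dsc a m ((m+1)/2) * dsc a (m-1) (m/2))^m
      = (dsc a (m-1) (m/2) * dsc a m ((m+1)/2))^m := by
  have hYX : dsc a (m-1) (m/2) * dsc a m ((m+1)/2) = rif a m := rifeq a m hc m le_rfl
  have hconj : ∃ g : G, Commute ((seg a 1 m)^m) g ∧ rif a m = g * seg a 1 m * g⁻¹ := by
    rcases Nat.even_or_odd m with hev | hod
    · have hev' : m % 2 = 0 := Nat.even_iff.mp hev
      obtain ⟨g, hg, heq⟩ := conj a m hm hb h4 hc (m/2) 1 le_rfl (by omega) (by omega)
      rw [show 1+2*(m/2) = m+1 by omega, show m+1-1 = m by omega,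
          Nat.sub_self, seg_zero, mul_one] at heq
      exact ⟨g, hg, heq⟩
    · have hod' : m % 2 = 1 := Nat.odd_iff.mp hod
      obtain ⟨g, hg, heq⟩ := conj a m hm hb h4 hc ((m-1)/2) 2 (by omega) le_rfl (by omega)
      rw [show 2+2*((m-1)/2) = m+1 by omega, show m+1-1 = m by omega,
          Nat.sub_self, seg_zero, mul_one] at heq
      exact ⟨g, hg, heq⟩
  obtain ⟨g, hg, he⟩ := hconj
  have hYXm : (dsc a (m-1) (m/2) * dsc a m ((m+1)/2))^m = (seg a 1 m)^m := by
    rw [hYX, he, conj_pow_aux, ← hg.eq, mul_assoc, mul_inv_cancel, mul_one]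
  have hX : Commute ((seg a 1 m)^m) (dsc a m ((m+1)/2)) :=
    commute_dsc a m ((m+1)/2)
      (fun s h1 h2 => cent a m hm hb h4 hc s h1 h2) (by omega)
  have hXY : dsc a m ((m+1)/2) * dsc a (m-1) (m/2)
      = dsc a m ((m+1)/2) * (dsc a (m-1) (m/2) * dsc a m ((m+1)/2))
          * (dsc a m ((m+1)/2))⁻¹ := by group
  rw [hXY, conj_pow_aux, hYXm, ← hX.eq, mul_assoc, mul_inv_cancel, mul_one]

end Master

/-- derive the type-B 4-relation from D-type relations -/
theorem quad {A B C : G} (hAB : A*B*A = B*A*B) (hAC : A*C*A = C*A*C) (hBC : B*C = C*B) :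
    (B*C) * A * (B*C) * A = A * (B*C) * A * (B*C) := by
  have hACt : ∀ x : G, C*(A*(C*x)) = A*(C*(A*x)) := by
    intro x
    simp only [← mul_assoc]
    rw [← hAC]
  have hABt : ∀ x : G, A*(B*(A*x)) = B*(A*(B*x)) := by
    intro x
    simp only [← mul_assoc]
    rw [hAB]
  have hBCt : ∀ x : G, B*(C*x) = C*(B*x) := by
    intro x
    rw [← mul_assoc, hBC, mul_assoc]
  have hCBt : ∀ x : G, C*(B*x) = B*(C*x) := fun x => (hBCt x).symm
  have hABr : B*(A*B) = A*(B*A) := by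
    simp only [← mul_assoc]
    rw [← hAB]
  simp only [mul_assoc]
  conv_rhs => rw [hBC, hACt, hABt, hBCt, hABr, ← hACt, hCBt]

/-- the folded generators -/
def aa (T : ℕ → G) (k : ℕ) : ℕ → G := fun i => if i = 1 then T (k-1) * T k else T (k - i)

theorem aa_one (T : ℕ → G) (k : ℕ) : aa T k 1 = T (k-1) * T k := rfl

theorem aa_ne_one (T : ℕ → G) (k : ℕ) (i : ℕ) (h : i ≠ 1) : aa T k i = T (k - i) := by
  simp only [aa]
  rw [if_neg h]

theorem transF (T : ℕ → G) (k : ℕ) (q : ℕ) (h : 2*q ≤ k) :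
    ((List.range q).map (fun i => T (2*i + (k - 2*q)))).prod = dsc (aa T k) (2*q) q := by
  induction q with
  | zero => simp [dsc_zero]
  | succ q ih =>
      rw [List.range_succ_eq_map, List.map_cons, List.prod_cons, List.map_map]
      have hf : ((fun i => T (2*i + (k - 2*(q+1)))) ∘ Nat.succ)
          = fun i => T (2*i + (k - 2*q)) := by
        funext i
        simp only [Function.comp]
        congr 1
        omega
      rw [hf, ih (by omega), show 2*(q+1) = 2*q+2 by ring, dsc_succ,
          show 2*q+2-2 = 2*q by omega]
      congr 1
      rw [aa_ne_one T k (2*q+2) (by omega)]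
      congr 1
      omega

theorem transE' (T : ℕ → G) (k : ℕ) (q : ℕ) (h : 2*q+1 ≤ k) :
    ((List.range q).map (fun i => T (2*i + (k - 1 - 2*q)))).prod * T (k-1) * T k
      = dsc (aa T k) (2*q+1) (q+1) := by
  induction q with
  | zero =>
      rw [show 2*0+1 = 1 by norm_num, dsc_succ, dsc_zero, mul_one, aa_one]
      simp
  | succ q ih =>
      rw [List.range_succ_eq_map, List.map_cons, List.prod_cons, List.map_map]
      have hf : ((fun i => T (2*i + (k - 1 - 2*(q+1)))) ∘ Nat.succ)
          = fun i => T (2*i + (k - 1 - 2*q)) := by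
        funext i
        simp only [Function.comp]
        congr 1
        omega
      have ih' := ih (by omega)
      rw [mul_assoc] at ih'
      rw [hf]
      rw [show 2*(q+1)+1 = 2*q+3 by ring, dsc_succ, show 2*q+3-2 = 2*q+1 by omega]
      simp only [mul_assoc]
      rw [ih']
      congr 1
      rw [aa_ne_one T k (2*q+3) (by omega)]
      congr 1
      omega

end FoldAux

theorem altProd_succ' {G : Type*} [Monoid G] (x y : G) (n : ℕ) :
    altProd x y (n+1) = x * altProd y x n := rfl

theorem altProd_even' {G : Type*} [Monoid G] (x y : G) (n : ℕ) :
    altProd x y (2*n) = (x*y)^n := by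
  induction n with
  | zero => simp [altProd]
  | succ n ih =>
      rw [show 2*(n+1) = 2*n+1+1 by ring, altProd_succ', altProd_succ', ih,
          pow_succ', mul_assoc]


theorem folding_D_artin_relation {G : Type*} [Group G] (k : ℕ) (hk : 4 ≤ k) (T : ℕ → G)
    (hbraid : ∀ i, 1 ≤ i → i ≤ k - 2 → T i * T (i + 1) * T i = T (i + 1) * T i * T (i + 1))
    (hbraid' : T (k - 2) * T k * T (k - 2) = T k * T (k - 2) * T k)
    (hcomm : ∀ i j, 1 ≤ i → i + 2 ≤ j → j ≤ k - 1 → T i * T j = T j * T i)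
    (hcomm' : ∀ i, 1 ≤ i → i ≤ k - 3 → T i * T k = T k * T i)
    (hcommLast : T (k - 1) * T k = T k * T (k - 1)) :
    (Even k →
      altProd (((List.range (k / 2)).map (fun i => T (2 * i + 1))).prod * T k)
          (((List.range (k / 2 - 1)).map (fun i => T (2 * i + 2))).prod) (2 * k - 2)
        = altProd (((List.range (k / 2 - 1)).map (fun i => T (2 * i + 2))).prod)
          (((List.range (k / 2)).map (fun i => T (2 * i + 1))).prod * T k) (2 * k - 2)) ∧
    (Odd k →
      altProd (((List.range ((k - 1) / 2)).map (fun i => T (2 * i + 1))).prod)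
          (((List.range ((k - 3) / 2)).map (fun i => T (2 * i + 2))).prod * T (k - 1) * T k)
          (2 * k - 2)
        = altProd (((List.range ((k - 3) / 2)).map (fun i => T (2 * i + 2))).prod
            * T (k - 1) * T k)
          (((List.range ((k - 1) / 2)).map (fun i => T (2 * i + 1))).prod) (2 * k - 2)) := by
  have hb : ∀ i, 2 ≤ i → i + 1 ≤ k-1 →
      FoldAux.aa T k i * FoldAux.aa T k (i+1) * FoldAux.aa T k i
        = FoldAux.aa T k (i+1) * FoldAux.aa T k i * FoldAux.aa T k (i+1) := by
    intro i h2 hi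
    rw [FoldAux.aa_ne_one T k i (by omega), FoldAux.aa_ne_one T k (i+1) (by omega)]
    have hbr := hbraid (k-i-1) (by omega) (by omega)
    rw [show k-i-1+1 = k-i by omega] at hbr
    rw [show k-(i+1) = k-i-1 by omega]
    exact hbr.symm
  have h4 : FoldAux.aa T k 1 * FoldAux.aa T k 2 * FoldAux.aa T k 1 * FoldAux.aa T k 2
      = FoldAux.aa T k 2 * FoldAux.aa T k 1 * FoldAux.aa T k 2 * FoldAux.aa T k 1 := by
    rw [FoldAux.aa_one, FoldAux.aa_ne_one T k 2 (by omega)]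
    have hAB : T (k-2) * T (k-1) * T (k-2) = T (k-1) * T (k-2) * T (k-1) := by
      have := hbraid (k-2) (by omega) (le_refl _)
      rwa [show k-2+1 = k-1 by omega] at this
    exact FoldAux.quad hAB hbraid' hcommLast
  have hcA : ∀ i j, 1 ≤ i → i + 2 ≤ j → j ≤ k-1 →
      FoldAux.aa T k i * FoldAux.aa T k j = FoldAux.aa T k j * FoldAux.aa T k i := by
    intro i j h1 h2 h3
    by_cases hi1 : i = 1
    · subst hi1
      rw [FoldAux.aa_one, FoldAux.aa_ne_one T k j (by omega)]
      have cb := hcomm (k-j) (k-1) (by omega) (by omega) (by omega)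
      have cc := hcomm' (k-j) (by omega) (by omega)
      rw [mul_assoc, ← cc, ← mul_assoc, ← cb, mul_assoc]
    · rw [FoldAux.aa_ne_one T k i hi1, FoldAux.aa_ne_one T k j (by omega)]
      exact (hcomm (k-j) (k-i) (by omega) (by omega) (by omega)).symm
  have hmain := FoldAux.master (FoldAux.aa T k) (k-1) (by omega) hb h4 hcA
  constructor
  · intro hkE
    have hk2 : k % 2 = 0 := Nat.even_iff.mp hkE
    rw [show 2*k-2 = 2*(k-1) by omega, altProd_even', altProd_even']
    have hXt : ((List.range (k / 2)).map (fun i => T (2 * i + 1))).prod * T k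
        = FoldAux.dsc (FoldAux.aa T k) (k-1) (k/2) := by
      rw [show k/2 = (k/2-1)+1 by omega, List.range_succ, List.map_append, List.prod_append,
          List.map_cons, List.map_nil, List.prod_cons, List.prod_nil, mul_one,
          show 2*(k/2-1)+1 = k-1 by omega]
      have hE := FoldAux.transE' T k (k/2-1) (by omega)
      rw [show k-1-2*(k/2-1) = 1 by omega, show 2*(k/2-1)+1 = k-1 by omega] at hE
      exact hE
    have hYt : ((List.range (k / 2 - 1)).map (fun i => T (2 * i + 2))).prod
        = FoldAux.dsc (FoldAux.aa T k) (k-2) (k/2-1) := by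
      have hF := FoldAux.transF T k (k/2-1) (by omega)
      rw [show k-2*(k/2-1) = 2 by omega, show 2*(k/2-1) = k-2 by omega] at hF
      exact hF
    rw [hXt, hYt]
    rw [show (k-1+1)/2 = k/2 by omega, show k-1-1 = k-2 by omega,
        show (k-1)/2 = k/2-1 by omega] at hmain
    exact hmain
  · intro hkO
    have hk2 : k % 2 = 1 := Nat.odd_iff.mp hkO
    rw [show 2*k-2 = 2*(k-1) by omega, altProd_even', altProd_even']
    have hXt : ((List.range ((k-1) / 2)).map (fun i => T (2 * i + 1))).prod
        = FoldAux.dsc (FoldAux.aa T k) (k-1) ((k-1)/2) := by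
      have hF := FoldAux.transF T k ((k-1)/2) (by omega)
      rw [show k-2*((k-1)/2) = 1 by omega, show 2*((k-1)/2) = k-1 by omega] at hF
      exact hF
    have hYt : ((List.range ((k-3) / 2)).map (fun i => T (2 * i + 2))).prod * T (k-1) * T k
        = FoldAux.dsc (FoldAux.aa T k) (k-2) ((k-1)/2) := by
      have hE := FoldAux.transE' T k ((k-3)/2) (by omega)
      rw [show k-1-2*((k-3)/2) = 2 by omega, show 2*((k-3)/2)+1 = k-2 by omega,
          show (k-3)/2+1 = (k-1)/2 by omega] at hE
      exact hE
    rw [hXt, hYt]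
    rw [show (k-1+1)/2 = (k-1)/2 by omega, show k-1-1 = k-2 by omega] at hmain
    exact hmain
end

section
/- Let G be a group containing T₀, T₁, T₂ with T₀T₁T₀ = T₁T₀T₁, T₁T₂T₁ = T₂T₁T₂, and T₀T₂ = T₂T₀. Set x = T₀ and y = T₁T₂. Then (xy)⁴ = (yx)⁴, i.e., x and y satisfy the Artin relation of length 8. -/
theorem chain_three_artin_eight {G : Type*} [Group G] (T₀ T₁ T₂ : G)
    (h01 : T₀ * T₁ * T₀ = T₁ * T₀ * T₁)
    (h12 : T₁ * T₂ * T₁ = T₂ * T₁ * T₂)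
    (h02 : T₀ * T₂ = T₂ * T₀) :
    (T₀ * (T₁ * T₂)) ^ 4 = ((T₁ * T₂) * T₀) ^ 4 := by
  have r01 : ∀ w : G, T₀ * (T₁ * (T₀ * w)) = T₁ * (T₀ * (T₁ * w)) := fun w => by
    rw [← mul_assoc, ← mul_assoc, h01, mul_assoc, mul_assoc]
  have r12 : ∀ w : G, T₁ * (T₂ * (T₁ * w)) = T₂ * (T₁ * (T₂ * w)) := fun w => by
    rw [← mul_assoc, ← mul_assoc, h12, mul_assoc, mul_assoc]
  have r02 : ∀ w : G, T₀ * (T₂ * w) = T₂ * (T₀ * w) := fun w => by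
    rw [← mul_assoc, h02, mul_assoc]
  have r01' : ∀ w : G, T₁ * (T₀ * (T₁ * w)) = T₀ * (T₁ * (T₀ * w)) := fun w => (r01 w).symm
  have r12' : ∀ w : G, T₂ * (T₁ * (T₂ * w)) = T₁ * (T₂ * (T₁ * w)) := fun w => (r12 w).symm
  have r02' : ∀ w : G, T₂ * (T₀ * w) = T₀ * (T₂ * w) := fun w => (r02 w).symm
  have master : ∀ w : G,
      T₀ * (T₀ * (T₁ * (T₂ * (T₀ * (T₁ * (T₂ * (T₀ * (T₁ * (T₂ * (T₀ * (T₁ * (T₂ * w)))))))))))) =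
      T₀ * (T₁ * (T₂ * (T₀ * (T₁ * (T₂ * (T₀ * (T₁ * (T₂ * (T₀ * (T₁ * (T₂ * (T₀ * w)))))))))))) := by
    intro w
    calc T₀ * (T₀ * (T₁ * (T₂ * (T₀ * (T₁ * (T₂ * (T₀ * (T₁ * (T₂ * (T₀ * (T₁ * (T₂ * (w)))))))))))))
      _ = T₀ * (T₀ * (T₁ * (T₀ * (T₂ * (T₁ * (T₂ * (T₀ * (T₁ * (T₂ * (T₀ * (T₁ * (T₂ * (w))))))))))))) := by rw [r02' (T₁ * (T₂ * (T₀ * (T₁ * (T₂ * (T₀ * (T₁ * (T₂ * (w)))))))))]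
      _ = T₀ * (T₁ * (T₀ * (T₁ * (T₂ * (T₁ * (T₂ * (T₀ * (T₁ * (T₂ * (T₀ * (T₁ * (T₂ * (w))))))))))))) := by rw [r01 (T₂ * (T₁ * (T₂ * (T₀ * (T₁ * (T₂ * (T₀ * (T₁ * (T₂ * (w))))))))))]
      _ = T₀ * (T₁ * (T₀ * (T₂ * (T₁ * (T₂ * (T₂ * (T₀ * (T₁ * (T₂ * (T₀ * (T₁ * (T₂ * (w))))))))))))) := by rw [r12 (T₂ * (T₀ * (T₁ * (T₂ * (T₀ * (T₁ * (T₂ * (w))))))))]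
      _ = T₀ * (T₁ * (T₂ * (T₀ * (T₁ * (T₂ * (T₂ * (T₀ * (T₁ * (T₂ * (T₀ * (T₁ * (T₂ * (w))))))))))))) := by rw [r02 (T₁ * (T₂ * (T₂ * (T₀ * (T₁ * (T₂ * (T₀ * (T₁ * (T₂ * (w))))))))))]
      _ = T₀ * (T₁ * (T₂ * (T₀ * (T₁ * (T₂ * (T₀ * (T₂ * (T₁ * (T₂ * (T₀ * (T₁ * (T₂ * (w))))))))))))) := by rw [r02' (T₁ * (T₂ * (T₀ * (T₁ * (T₂ * (w))))))]
      _ = T₀ * (T₁ * (T₂ * (T₀ * (T₁ * (T₂ * (T₀ * (T₁ * (T₂ * (T₁ * (T₀ * (T₁ * (T₂ * (w))))))))))))) := by rw [r12' (T₀ * (T₁ * (T₂ * (w))))]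
      _ = T₀ * (T₁ * (T₂ * (T₀ * (T₁ * (T₂ * (T₀ * (T₁ * (T₂ * (T₀ * (T₁ * (T₀ * (T₂ * (w))))))))))))) := by rw [r01' (T₂ * (w))]
      _ = T₀ * (T₁ * (T₂ * (T₀ * (T₁ * (T₂ * (T₀ * (T₁ * (T₂ * (T₀ * (T₁ * (T₂ * (T₀ * (w))))))))))))) := by rw [r02 (w)]
  apply mul_left_cancel (a := T₀)
  have m := master (1 : G)
  simp only [mul_one] at m
  calc T₀ * (T₀ * (T₁ * T₂)) ^ 4
      = T₀ * (T₀ * (T₁ * (T₂ * (T₀ * (T₁ * (T₂ * (T₀ * (T₁ * (T₂ * (T₀ * (T₁ * T₂))))))))))) := by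
        simp only [pow_succ, pow_zero, one_mul, mul_assoc]
    _ = T₀ * (T₁ * (T₂ * (T₀ * (T₁ * (T₂ * (T₀ * (T₁ * (T₂ * (T₀ * (T₁ * (T₂ * T₀))))))))))) := m
    _ = T₀ * (T₁ * T₂ * T₀) ^ 4 := by simp only [pow_succ, pow_zero, one_mul, mul_assoc]
end
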